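/- arXiv:1311.7566 — 5 statements merged into one kernel-verified Lean document; each statement's English description precedes it below -/
import Mathlib

section
/- If A and B are n×n real symmetric matrices, then δ₂(λ(A), λ(B)) ≤ ‖A − B‖_F, i.e., the minimum over permutations σ of (∑_i (λ_i(A) − λ_{σ(i)}(B))²)^{1/2} is at most the Frobenius norm of A − B. -/
open Matrix Finset

private lemma hw_frob_sq_eq_trace {n : ℕ} (X : Matrix (Fin n) (Fin n) ℝ) :
    ∑ i, ∑ j, X i j ^ 2 = (star X * X).trace := by
  simp only [Matrix.trace, Matrix.diag, Matrix.mul_apply, Matrix.star_apply, star_trivial, sq]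
  exact Finset.sum_comm

private lemma hw_frob_conj {n : ℕ} {U V : Matrix (Fin n) (Fin n) ℝ}
    (hU : U * star U = 1) (hV : V * star V = 1) (X : Matrix (Fin n) (Fin n) ℝ) :
    ∑ i, ∑ j, ((star U * X * V) i j) ^ 2 = ∑ i, ∑ j, X i j ^ 2 := by
  rw [hw_frob_sq_eq_trace, hw_frob_sq_eq_trace]
  have h1 : star (star U * X * V) * (star U * X * V) = star V * (star X * X) * V := by
    have h2 : star V * (star X * ((U * star U) * (X * V))) = star V * (star X * X) * V := by
      rw [hU, Matrix.one_mul]; simp only [Matrix.mul_assoc]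
    rw [← h2]; simp only [StarMul.star_mul, star_star, Matrix.mul_assoc]
  rw [h1, Matrix.trace_mul_cycle, ← Matrix.mul_assoc, hV, Matrix.one_mul]

/-- Hoffman–Wielandt inequality for real symmetric matrices:
`δ₂(λ(A), λ(B)) ≤ ‖A − B‖_F`, i.e. some permutation `σ` satisfies
`∑ i, (λ_i(A) − λ_{σ(i)}(B))² ≤ ∑_{i,j} (A i j − B i j)²`. -/
theorem hoffman_wielandt_symmetric {n : ℕ}
    (A B : Matrix (Fin n) (Fin n) ℝ)
    (hA : A.IsHermitian) (hB : B.IsHermitian) :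
    ∃ σ : Equiv.Perm (Fin n),
      Real.sqrt (∑ i, (hA.eigenvalues i - hB.eigenvalues (σ i)) ^ 2) ≤
        Real.sqrt (∑ i, ∑ j, (A i j - B i j) ^ 2) := by
  classical
  set U : Matrix (Fin n) (Fin n) ℝ := (hA.eigenvectorUnitary : Matrix (Fin n) (Fin n) ℝ) with hUdef
  set V : Matrix (Fin n) (Fin n) ℝ := (hB.eigenvectorUnitary : Matrix (Fin n) (Fin n) ℝ) with hVdef
  set lA := hA.eigenvalues
  set lB := hB.eigenvalues
  have hUmem : U ∈ Matrix.unitaryGroup (Fin n) ℝ := hA.eigenvectorUnitary.2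
  have hVmem : V ∈ Matrix.unitaryGroup (Fin n) ℝ := hB.eigenvectorUnitary.2
  have hU1 : U * star U = 1 := mem_unitaryGroup_iff.mp hUmem
  have hU2 : star U * U = 1 := mem_unitaryGroup_iff'.mp hUmem
  have hV1 : V * star V = 1 := mem_unitaryGroup_iff.mp hVmem
  have hV2 : star V * V = 1 := mem_unitaryGroup_iff'.mp hVmem
  set W : Matrix (Fin n) (Fin n) ℝ := star U * V with hWdef
  have hWmem : W ∈ Matrix.unitaryGroup (Fin n) ℝ :=
    mul_mem (Unitary.star_mem hUmem) hVmem
  have hW1 : W * star W = 1 := mem_unitaryGroup_iff.mp hWmem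
  have hW2 : star W * W = 1 := mem_unitaryGroup_iff'.mp hWmem
  have hAeq : A = U * (diagonal lA) * star U := by simpa using hA.spectral_theorem
  have hBeq : B = V * (diagonal lB) * star V := by simpa using hB.spectral_theorem
  -- key identity
  have h1 : star U * A * V = (diagonal lA) * W := by
    rw [hAeq]
    have : star U * (U * (diagonal lA) * star U) * V = (star U * U) * ((diagonal lA) * (star U * V)) := by
      simp only [Matrix.mul_assoc]
    rw [this, hU2, Matrix.one_mul]
  have h2 : star U * B * V = W * (diagonal lB) := by
    rw [hBeq]
    have : star U * (V * (diagonal lB) * star V) * V = (star U * V) * ((diagonal lB) * (star V * V)) := by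
      simp only [Matrix.mul_assoc]
    rw [this, hV2, Matrix.mul_one]
  have key : star U * (A - B) * V = (diagonal lA) * W - W * (diagonal lB) := by
    rw [Matrix.mul_sub, Matrix.sub_mul, h1, h2]
    -- entries
  set c : Fin n → Fin n → ℝ := fun i j => (lA i - lB j) ^ 2 with hcdef
  have hentry : ∀ i j, ((star U * (A - B) * V) i j) ^ 2 = W i j ^ 2 * c i j := by
    intro i j
    rw [key]
    simp only [Matrix.sub_apply, Matrix.diagonal_mul, Matrix.mul_diagonal, hcdef]
    ring
  -- doubly stochastic
  set S : Matrix (Fin n) (Fin n) ℝ := Matrix.of fun i j => W i j ^ 2 with hSdef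
  have hrow : ∀ i, ∑ j, S i j = 1 := by
    intro i
    have h := congrFun (congrFun hW1 i) i
    simp only [Matrix.mul_apply, Matrix.one_apply_eq, Matrix.star_apply, star_trivial] at h
    simpa [hSdef, sq] using h
  have hcol : ∀ j, ∑ i, S i j = 1 := by
    intro j
    have h := congrFun (congrFun hW2 j) j
    simp only [Matrix.mul_apply, Matrix.one_apply_eq, Matrix.star_apply, star_trivial] at h
    simpa [hSdef, sq, mul_comm] using h
  have hSmem : S ∈ doublyStochastic ℝ (Fin n) :=
    mem_doublyStochastic_iff_sum.mpr ⟨fun i j => sq_nonneg _, hrow, hcol⟩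
  obtain ⟨w, hw0, hw1, hw2⟩ := exists_eq_sum_perm_of_mem_doublyStochastic hSmem
  have hexpand : ∀ i j, S i j = ∑ σ : Equiv.Perm (Fin n), w σ * (σ.permMatrix ℝ) i j := by
    intro i j
    rw [← hw2]
    simp [Matrix.sum_apply]
  have hsum : ∑ i, ∑ j, S i j * c i j
      = ∑ σ : Equiv.Perm (Fin n), w σ * ∑ i, c i (σ i) := by
    have hinner : ∀ i, ∑ j, S i j * c i j
        = ∑ σ : Equiv.Perm (Fin n), w σ * c i (σ i) := by
      intro i
      calc ∑ j, S i j * c i j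
          = ∑ j, ∑ σ : Equiv.Perm (Fin n), w σ * (σ.permMatrix ℝ) i j * c i j := by
            simp only [hexpand, Finset.sum_mul]
        _ = ∑ σ : Equiv.Perm (Fin n), ∑ j, w σ * (σ.permMatrix ℝ) i j * c i j :=
            Finset.sum_comm
        _ = ∑ σ : Equiv.Perm (Fin n), w σ * c i (σ i) := by
            refine Finset.sum_congr rfl fun σ _ => ?_
            simp [Equiv.Perm.permMatrix, PEquiv.toMatrix_apply, Equiv.toPEquiv_apply,
              mul_ite, ite_mul, Finset.sum_ite_eq']
    rw [Finset.sum_congr rfl fun i _ => hinner i, Finset.sum_comm]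
    simp [Finset.mul_sum]
  obtain ⟨σ₀, -, hσ₀⟩ := Finset.exists_min_image (Finset.univ : Finset (Equiv.Perm (Fin n)))
    (fun σ => ∑ i, c i (σ i)) ⟨1, Finset.mem_univ 1⟩
  refine ⟨σ₀, Real.sqrt_le_sqrt ?_⟩
  have hmin : ∑ i, c i (σ₀ i) ≤ ∑ σ : Equiv.Perm (Fin n), w σ * ∑ i, c i (σ i) := by
    calc ∑ i, c i (σ₀ i) = ∑ σ : Equiv.Perm (Fin n), w σ * ∑ i, c i (σ₀ i) := by
          rw [← Finset.sum_mul, hw1, one_mul]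
      _ ≤ _ := Finset.sum_le_sum fun σ _ =>
          mul_le_mul_of_nonneg_left (hσ₀ σ (Finset.mem_univ σ)) (hw0 σ)
  calc ∑ i, (lA i - lB (σ₀ i)) ^ 2 = ∑ i, c i (σ₀ i) := rfl
    _ ≤ ∑ σ : Equiv.Perm (Fin n), w σ * ∑ i, c i (σ i) := hmin
    _ = ∑ i, ∑ j, S i j * c i j := hsum.symm
    _ = ∑ i, ∑ j, ((star U * (A - B) * V) i j) ^ 2 :=
        Finset.sum_congr rfl fun i _ => Finset.sum_congr rfl fun j _ => (hentry i j).symm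
    _ = ∑ i, ∑ j, (A i j - B i j) ^ 2 := by
        rw [hw_frob_conj hU1 hV1]
        simp [Matrix.sub_apply]
end

section
/- Marcinkiewicz–Zygmund strong law of large numbers: if (ξ_i) are i.i.d. real random variables with E|ξ_1|^p < ∞ for some p ∈ (0,1), then n^{−1/p} ∑_{i=1}^n ξ_i → 0 almost surely. -/
/-!
Truncate `ξ i` where `|ξ i| ^ p > i`. Since `∑ ℙ(|ξ 0| ^ p > i) ≤ 1 + 𝔼|ξ 0| ^ p`, Borel–Cantelli
shows that almost surely only finitely many `ξ i` are truncated. Comparing with an integral,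
`∑_{i ≥ y ^ p} i ^ (-1/p) y ≤ y ^ p / (1 - p)`, so
`𝔼 ∑ i ^ (-1/p) |ξ i| 1{|ξ i| ^ p ≤ i} ≤ 𝔼|ξ 0| ^ p / (1 - p) < ∞` and `∑ i ^ (-1/p) |ξ i|`
converges almost surely. Dominated convergence for series (Tannery) then turns this into
`n ^ (-1/p) ∑_{i<n} ξ i → 0`.
-/

open MeasureTheory Filter Finset Topology
open ProbabilityTheory (IdentDistrib tsum_prob_mem_Ioi_lt_top)
open scoped ENNReal

lemma sum_Ico_rpow_neg_le {r : ℝ} (hr : 1 < r) {m : ℕ} (hm : 1 ≤ m) (n : ℕ) :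
    ∑ i ∈ Ico m n, (i : ℝ) ^ (-r) ≤ r / (r - 1) * (m : ℝ) ^ (1 - r) := by
  have hm0 : (0 : ℝ) < m := by exact_mod_cast hm
  have hr1 : 0 < r - 1 := by linarith
  have hshift :
      ∑ i ∈ Ico (m + 1) n, (i : ℝ) ^ (-r) ≤ ∑ i ∈ Ico m n, ((i + 1 : ℕ) : ℝ) ^ (-r) := by
    rw [sum_Ico_add' (fun i : ℕ => (i : ℝ) ^ (-r)) m n 1]
    exact sum_le_sum_of_subset_of_nonneg (Ico_subset_Ico_right (by omega))
      fun i _ _ => by positivity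
  have hintegral : ∑ i ∈ Ico m n, ((i + 1 : ℕ) : ℝ) ^ (-r) ≤ (m : ℝ) ^ (1 - r) / (r - 1) := by
    calc _ ≤ ∫ t in Set.Ioi (m : ℝ), t ^ (-r) :=
          AntitoneOn.sum_Ico_le_integral
            (fun x hx y _ hxy => Real.rpow_le_rpow_of_nonpos (hm0.trans_le hx.1) hxy (by linarith))
            (integrableOn_Ioi_rpow_of_lt (by linarith) hm0)
            fun t ht => Real.rpow_nonneg (hm0.trans ht).le _
      _ = (m : ℝ) ^ (1 - r) / (r - 1) := by
          rw [integral_Ioi_rpow_of_lt (by linarith) hm0, neg_div, ← div_neg]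
          ring_nf
  have hfirst : (m : ℝ) ^ (-r) ≤ (m : ℝ) ^ (1 - r) :=
    Real.rpow_le_rpow_of_exponent_le (by exact_mod_cast hm) (by linarith)
  rcases le_or_gt n m with hnm | hmn
  · rw [Ico_eq_empty_of_le hnm, sum_empty]
    positivity
  calc ∑ i ∈ Ico m n, (i : ℝ) ^ (-r)
      = (m : ℝ) ^ (-r) + ∑ i ∈ Ico (m + 1) n, (i : ℝ) ^ (-r) := sum_eq_sum_Ico_succ_bot hmn _
    _ ≤ (m : ℝ) ^ (1 - r) + (m : ℝ) ^ (1 - r) / (r - 1) := by gcongr; exact hshift.trans hintegral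
    _ = r / (r - 1) * (m : ℝ) ^ (1 - r) := by field_simp; ring

lemma mul_rpow_one_sub_one_div_le {p : ℝ} (hp0 : 0 < p) (hp1 : p ≤ 1) {y m : ℝ} (hy : 0 ≤ y)
    (hm : y ^ p ≤ m) : y * m ^ (1 - 1 / p) ≤ y ^ p := by
  rcases hy.eq_or_lt with rfl | hy0
  · simp [Real.zero_rpow hp0.ne']
  calc y * m ^ (1 - 1 / p) ≤ y * (y ^ p) ^ (1 - 1 / p) :=
        mul_le_mul_of_nonneg_left (Real.rpow_le_rpow_of_nonpos (by positivity) hm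
          (sub_nonpos.2 (one_le_one_div hp0 hp1))) hy
    _ = y ^ p := by
        rw [← Real.rpow_mul hy, show p * (1 - 1 / p) = p - 1 by field_simp, Real.rpow_sub hy0,
          Real.rpow_one]
        field_simp

lemma tsum_ofReal_ite_rpow_neg_mul_le {p : ℝ} (hp0 : 0 < p) (hp1 : p < 1) {y : ℝ} (hy : 0 ≤ y) :
    ∑' i : ℕ, ENNReal.ofReal (if y ^ p ≤ i then (i : ℝ) ^ (-(1 / p)) * y else 0)
      ≤ ENNReal.ofReal (1 / (1 - p) * y ^ p) := by
  refine ENNReal.tsum_le_of_sum_range_le fun n => ?_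
  rw [← ENNReal.ofReal_sum_of_nonneg fun i _ => by split_ifs <;> positivity]
  refine ENNReal.ofReal_le_ofReal ?_
  rcases hy.eq_or_lt with rfl | hy0
  · simp [Real.zero_rpow hp0.ne']
  set m := ⌈y ^ p⌉₊
  have hm : 1 ≤ m := Nat.one_le_iff_ne_zero.2 (Nat.ceil_pos.2 (by positivity)).ne'
  have hsub : (range n).filter (fun i : ℕ => y ^ p ≤ i) ⊆ Ico m n := fun i hi => by
    rw [mem_filter, mem_range] at hi
    exact mem_Ico.2 ⟨Nat.ceil_le.2 hi.2, hi.1⟩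
  rw [← sum_filter]
  calc ∑ i ∈ (range n).filter (fun i : ℕ => y ^ p ≤ i), (i : ℝ) ^ (-(1 / p)) * y
      ≤ (∑ i ∈ Ico m n, (i : ℝ) ^ (-(1 / p))) * y := by
        rw [sum_mul]
        exact sum_le_sum_of_subset_of_nonneg hsub fun i _ _ => by positivity
    _ ≤ (1 / p / (1 / p - 1) * (m : ℝ) ^ (1 - 1 / p)) * y :=
        mul_le_mul_of_nonneg_right (sum_Ico_rpow_neg_le (one_lt_one_div hp0 hp1) hm n) hy
    _ = 1 / (1 - p) * (y * (m : ℝ) ^ (1 - 1 / p)) := by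
        rw [show 1 / p / (1 / p - 1) = 1 / (1 - p) by field_simp]
        ring
    _ ≤ 1 / (1 - p) * y ^ p :=
        mul_le_mul_of_nonneg_left (mul_rpow_one_sub_one_div_le hp0 hp1.le hy (Nat.le_ceil _))
          (one_div_nonneg.2 (sub_nonneg.2 hp1.le))

lemma tendsto_rpow_neg_mul_sum_range_of_summable {r : ℝ} (hr : 0 < r) {a : ℕ → ℝ}
    (h : Summable fun i : ℕ => (i : ℝ) ^ (-r) * |a i|) :
    Tendsto (fun n : ℕ => (n : ℝ) ^ (-r) * ∑ i ∈ range n, a i) atTop (𝓝 0) := by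
  have hdecay : Tendsto (fun n : ℕ => (n : ℝ) ^ (-r)) atTop (𝓝 0) :=
    (tendsto_rpow_neg_atTop hr).comp tendsto_natCast_atTop_atTop
  have hlim (i : ℕ) :
      Tendsto (fun n : ℕ => if i < n then (n : ℝ) ^ (-r) * a i else 0) atTop (𝓝 0) := by
    simpa using (hdecay.mul_const (a i)).congr'
      ((eventually_gt_atTop i).mono fun n hn => (if_pos hn).symm)
  -- `0 ^ (-r) = 0`, so the first term needs its own bound
  have hbound : ∀ᶠ n : ℕ in atTop, ∀ i, ‖if i < n then (n : ℝ) ^ (-r) * a i else 0‖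
      ≤ Function.update (fun i : ℕ => (i : ℝ) ^ (-r) * |a i|) 0 |a 0| i := by
    filter_upwards [eventually_ge_atTop 1] with n hn i
    split_ifs with hin
    · rw [norm_mul, Real.norm_of_nonneg (by positivity), Real.norm_eq_abs]
      rcases Nat.eq_zero_or_pos i with rfl | hi
      · rw [Function.update_self]
        exact mul_le_of_le_one_left (abs_nonneg _)
          (Real.rpow_le_one_of_one_le_of_nonpos (Nat.one_le_cast.2 hn) (by linarith))
      · rw [Function.update_of_ne hi.ne']
        exact mul_le_mul_of_nonneg_right (Real.rpow_le_rpow_of_nonpos (Nat.cast_pos.2 hi)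
          (Nat.cast_le.2 hin.le) (by linarith)) (abs_nonneg _)
    · rw [norm_zero]
      rcases Nat.eq_zero_or_pos i with rfl | hi
      · simp
      · rw [Function.update_of_ne hi.ne']
        positivity
  have := tendsto_tsum_of_dominated_convergence (h.update 0 |a 0|) hlim hbound
  rw [tsum_zero] at this
  refine this.congr fun n => ?_
  rw [tsum_eq_sum (s := range n) fun i hi => if_neg (by simpa using hi), mul_sum]
  exact sum_congr rfl fun i hi => if_pos (mem_range.1 hi)

section IdentDistrib

variable {Ω : Type*} [MeasurableSpace Ω] {μ : Measure Ω}

lemma ae_eventually_le_natCast_of_identDistrib [IsProbabilityMeasure μ] {Y : ℕ → Ω → ℝ}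
    (hident : ∀ i, IdentDistrib (Y i) (Y 0) μ μ) (hnonneg : 0 ≤ Y 0)
    (hint : Integrable (Y 0) μ) :
    ∀ᵐ ω ∂μ, ∀ᶠ i : ℕ in atTop, Y i ω ≤ i := by
  let : MeasureSpace Ω := ⟨μ⟩
  have hsum : ∑' i : ℕ, μ (Y i ⁻¹' Set.Ioi i) ≠ ∞ := by
    rw [tsum_congr fun i => (hident i).measure_mem_eq measurableSet_Ioi]
    exact (tsum_prob_mem_Ioi_lt_top hint hnonneg).ne
  filter_upwards [ae_eventually_notMem hsum] with ω hω
  simpa using hω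

lemma ae_tsum_lt_top_of_identDistrib {E : Type*} [MeasurableSpace E] {Y : ℕ → Ω → E}
    (hident : ∀ i, IdentDistrib (Y i) (Y 0) μ μ) {g : ℕ → E → ℝ≥0∞}
    (hg : ∀ i, Measurable (g i)) (hfin : ∫⁻ ω, ∑' i, g i (Y 0 ω) ∂μ ≠ ∞) :
    ∀ᵐ ω ∂μ, ∑' i, g i (Y i ω) < ∞ := by
  have hmeas (i : ℕ) : AEMeasurable (fun ω => g i (Y i ω)) μ :=
    (hg i).comp_aemeasurable (hident i).aemeasurable_fst
  have hlintegral (i : ℕ) : ∫⁻ ω, g i (Y i ω) ∂μ = ∫⁻ ω, g i (Y 0 ω) ∂μ :=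
    ((hident i).comp (hg i)).lintegral_eq
  refine ae_lt_top' (AEMeasurable.tsum hmeas) ?_
  rwa [lintegral_tsum hmeas, tsum_congr hlintegral,
    ← lintegral_tsum (f := fun i ω => g i (Y 0 ω))
      fun i => (hg i).comp_aemeasurable (hident 0).aemeasurable_fst]

end IdentDistrib

theorem marcinkiewicz_zygmund_slln_general
    {Ω : Type*} [MeasurableSpace Ω] (ℙ : Measure Ω) [IsProbabilityMeasure ℙ]
    (ξ : ℕ → Ω → ℝ)
    (hident : ∀ i, ProbabilityTheory.IdentDistrib (ξ i) (ξ 0) ℙ ℙ)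
    (p : ℝ) (hp0 : 0 < p) (hp1 : p < 1)
    (hint : Integrable (fun ω => |ξ 0 ω| ^ p) ℙ) :
    ∀ᵐ ω ∂ℙ, Tendsto
      (fun n : ℕ => (n : ℝ) ^ (-(1 / p)) * ∑ i ∈ Finset.range n, ξ i ω)
      atTop (nhds 0) := by
  have habs_rpow : Measurable fun x : ℝ => |x| ^ p := measurable_abs.pow_const p
  have huntruncated : ∀ᵐ ω ∂ℙ, ∀ᶠ i : ℕ in atTop, |ξ i ω| ^ p ≤ i :=
    ae_eventually_le_natCast_of_identDistrib (fun i => (hident i).comp habs_rpow)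
      (fun ω => by positivity) hint
  set g : ℕ → ℝ → ℝ := fun i x => if |x| ^ p ≤ i then (i : ℝ) ^ (-(1 / p)) * |x| else 0
  have htruncated : ∀ᵐ ω ∂ℙ, ∑' i, ENNReal.ofReal (g i (ξ i ω)) < ∞ := by
    refine ae_tsum_lt_top_of_identDistrib hident (fun i => Measurable.ennreal_ofReal <|
      Measurable.ite (measurableSet_le habs_rpow measurable_const)
        (measurable_const.mul measurable_abs) measurable_const) ?_
    exact ne_top_of_le_ne_top ((hint.const_mul (1 / (1 - p))).lintegral_lt_top.ne)
      (lintegral_mono fun ω => tsum_ofReal_ite_rpow_neg_mul_le hp0 hp1 (abs_nonneg _))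
  filter_upwards [huntruncated, htruncated] with ω hω hsum
  refine tendsto_rpow_neg_mul_sum_range_of_summable (by positivity) <|
    (ENNReal.summable_toReal hsum.ne).of_norm_bounded_eventually ?_
  filter_upwards [Nat.cofinite_eq_atTop ▸ hω] with i hi
  dsimp only [g]
  rw [if_pos hi, ENNReal.toReal_ofReal (by positivity), Real.norm_of_nonneg (by positivity)]

/-- Marcinkiewicz–Zygmund strong law of large numbers: if `(ξ i)` are i.i.d.
real random variables with `E|ξ 0|^p < ∞` for some `p ∈ (0,1)`, then
`n^(-1/p) ∑_{i<n} ξ i → 0` almost surely. -/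
theorem marcinkiewicz_zygmund_slln
    {Ω : Type*} [MeasurableSpace Ω] (ℙ : Measure Ω) [IsProbabilityMeasure ℙ]
    (ξ : ℕ → Ω → ℝ) (hmeas : ∀ i, Measurable (ξ i))
    (hindep : ProbabilityTheory.iIndepFun ξ ℙ)
    (hident : ∀ i, ProbabilityTheory.IdentDistrib (ξ i) (ξ 0) ℙ ℙ)
    (p : ℝ) (hp0 : 0 < p) (hp1 : p < 1)
    (hint : Integrable (fun ω => |ξ 0 ω| ^ p) ℙ) :
    ∀ᵐ ω ∂ℙ, Tendsto
      (fun n : ℕ => (n : ℝ) ^ (-(1 / p)) * ∑ i ∈ Finset.range n, ξ i ω)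
      atTop (nhds 0) :=
  marcinkiewicz_zygmund_slln_general ℙ ξ hident p hp0 hp1 hint
end

section
/- With f and h as in the Mercer-type setup, if X is a random variable with distribution π, then the Bochner expectation of the random Hilbert–Schmidt operator f(X) ⊗ f(X) equals the integral operator H with kernel h, i.e., E[f(X) ⊗ f(X)] = H where H u = ∑_{n∈I} λ_n ⟨φ_n, u⟩ φ_n. -/
open MeasureTheory Filter Topology InnerProductSpace

/-! Let `e n` be the class of `φ n` in `L²(π)` and `F_s x = ∑_{n ∈ s} √(λ n) φ n x • e n` the
partial sums of `f x`. Orthonormality of the `φ n` turns `∫ F_s ⊗ F_s dπ` into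
`∑_{n ∈ s} λ n • e n ⊗ e n`, which applied to `u` is a partial sum of the series defining `H u`.
Bessel's inequality bounds `‖F_s x ⊗ F_s x‖ = ‖F_s x‖²` by `‖f x‖² = h x x ≤ M`, so dominated
convergence lets `s` grow to all of `I`; finally the law of `X` moves the integral from `π` to `ℙ`.
-/

section Orthonormal

variable {ι E : Type*} [NormedAddCommGroup E] [InnerProductSpace ℝ E] {e : ι → E}

theorem Orthonormal.norm_sum_smul_sq (he : Orthonormal ℝ e) (c : ι → ℝ) (s : Finset ι) :
    ‖∑ n ∈ s, c n • e n‖ ^ 2 = ∑ n ∈ s, c n ^ 2 := by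
  rw [← real_inner_self_eq_norm_sq, he.inner_sum]
  simp [sq]

theorem Orthonormal.hasSum_sq_of_hasSum (he : Orthonormal ℝ e) {c : ι → ℝ} {v : E}
    (hv : HasSum (fun n => c n • e n) v) : HasSum (fun n => c n ^ 2) (‖v‖ ^ 2) :=
  (((continuous_norm.pow 2).tendsto v).comp hv).congr fun s => he.norm_sum_smul_sq c s

end Orthonormal

theorem rankOne_sum_smul_self {ι E : Type*} [NormedAddCommGroup E] [InnerProductSpace ℝ E]
    (s : Finset ι) (c : ι → ℝ) (e : ι → E) :
    rankOne ℝ (∑ n ∈ s, c n • e n) (∑ n ∈ s, c n • e n)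
      = ∑ n ∈ s, ∑ m ∈ s, (c n * c m) • rankOne ℝ (e n) (e m) := by
  rw [Finset.sum_comm]
  simp [Finset.smul_sum, smul_smul, mul_comm]

theorem continuous_rankOne_self {E : Type*} [NormedAddCommGroup E] [InnerProductSpace ℝ E] :
    Continuous fun v : E => rankOne ℝ v v :=
  (rankOne ℝ).continuous.clm_apply continuous_id

theorem MemLp.inner_toLp {α : Type*} [MeasurableSpace α] {μ : Measure α} {f g : α → ℝ}
    (hf : MemLp f 2 μ) (hg : MemLp g 2 μ) :
    inner ℝ (hf.toLp f) (hg.toLp g) = ∫ x, f x * g x ∂μ := by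
  rw [L2.inner_def]
  refine integral_congr_ae ?_
  filter_upwards [hf.coeFn_toLp, hg.coeFn_toLp] with x hfx hgx
  simp [hfx, hgx, mul_comm]

theorem integral_mul_eq_ite_of_orthonormal_toLp {α ι : Type*} [MeasurableSpace α]
    {μ : Measure α} [DecidableEq ι] {φ : ι → α → ℝ} (hmem : ∀ n, MemLp (φ n) 2 μ)
    (horth : Orthonormal ℝ fun n => (hmem n).toLp (φ n)) (n m : ι) :
    ∫ x, φ n x * φ m x ∂μ = if n = m then 1 else 0 := by
  rw [← MemLp.inner_toLp (hmem n) (hmem m), orthonormal_iff_ite.mp horth]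

theorem integral_sqrt_mul_mul_eq_ite_of_orthonormal_toLp {α ι : Type*} [MeasurableSpace α]
    {μ : Measure α} [DecidableEq ι] {lam : ι → ℝ} (hlam : ∀ n, 0 ≤ lam n) {φ : ι → α → ℝ}
    (hmem : ∀ n, MemLp (φ n) 2 μ) (horth : Orthonormal ℝ fun n => (hmem n).toLp (φ n))
    (n m : ι) :
    ∫ x, √(lam n) * φ n x * (√(lam m) * φ m x) ∂μ = if n = m then lam n else 0 := by
  calc ∫ x, √(lam n) * φ n x * (√(lam m) * φ m x) ∂μ
      = √(lam n) * √(lam m) * ∫ x, φ n x * φ m x ∂μ := by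
        rw [← integral_const_mul]
        congr 1 with x
        ring
    _ = if n = m then lam n else 0 := by
        rw [integral_mul_eq_ite_of_orthonormal_toLp hmem horth]
        split_ifs with hnm
        · rw [hnm, mul_one, Real.mul_self_sqrt (hlam m)]
        · rw [mul_zero]

theorem aestronglyMeasurable_of_hasSum {α ι E : Type*} [MeasurableSpace α] {μ : Measure α}
    [Countable ι] [NormedAddCommGroup E] {g : ι → α → E} {F : α → E}
    (hg : ∀ n, AEStronglyMeasurable (g n) μ) (hF : ∀ x, HasSum (fun n => g n x) (F x)) :
    AEStronglyMeasurable F μ :=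
  aestronglyMeasurable_of_tendsto_ae atTop
    (fun s => Finset.aestronglyMeasurable_sum s fun n _ => hg n)
    (ae_of_all _ fun x => by simp only [Finset.sum_apply]; exact hF x)

section

variable {α ι E : Type*} [MeasurableSpace α] {μ : Measure α} [NormedAddCommGroup E]
  [InnerProductSpace ℝ E] [CompleteSpace E] [DecidableEq ι]
  {e : ι → E} {ψ : ι → α → ℝ} {lam : ι → ℝ}

theorem integral_rankOne_sum_smul_self (hψ : ∀ n, MemLp (ψ n) 2 μ)
    (hψψ : ∀ n m, ∫ x, ψ n x * ψ m x ∂μ = if n = m then lam n else 0) (s : Finset ι) :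
    ∫ x, rankOne ℝ (∑ n ∈ s, ψ n x • e n) (∑ n ∈ s, ψ n x • e n) ∂μ
      = ∑ n ∈ s, lam n • rankOne ℝ (e n) (e n) := by
  have hint : ∀ n m, Integrable (fun x => (ψ n x * ψ m x) • rankOne ℝ (e n) (e m)) μ :=
    fun n m => ((hψ n).integrable_mul (hψ m)).smul_const _
  simp_rw [rankOne_sum_smul_self]
  rw [integral_finsetSum _ fun n _ => integrable_finsetSum _ fun m _ => hint n m]
  refine Finset.sum_congr rfl fun n hn => ?_
  rw [integral_finsetSum _ fun m _ => hint n m]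
  simp_rw [integral_smul_const, hψψ, ite_smul, zero_smul]
  rw [Finset.sum_ite_eq s n]
  simp [hn]

theorem integral_rankOne_eq_of_hasSum [IsFiniteMeasure μ] [Countable ι] (he : Orthonormal ℝ e)
    (hψ : ∀ n, MemLp (ψ n) 2 μ)
    (hψψ : ∀ n m, ∫ x, ψ n x * ψ m x ∂μ = if n = m then lam n else 0)
    {F : α → E} (hF : ∀ x, HasSum (fun n => ψ n x • e n) (F x)) {C : ℝ} (hFC : ∀ x, ‖F x‖ ≤ C)
    {H : E →L[ℝ] E} (hH : ∀ u, HasSum (fun n => (lam n * inner ℝ (e n) u) • e n) (H u)) :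
    ∫ x, rankOne ℝ (F x) (F x) ∂μ = H := by
  set Fs : Finset ι → α → E := fun s x => ∑ n ∈ s, ψ n x • e n
  have hlim : Tendsto (fun s => ∫ x, rankOne ℝ (Fs s x) (Fs s x) ∂μ) atTop
      (𝓝 (∫ x, rankOne ℝ (F x) (F x) ∂μ)) := by
    refine tendsto_integral_filter_of_dominated_convergence (fun _ => C ^ 2) ?_ ?_
      (integrable_const _) ?_
    · exact Eventually.of_forall fun s => continuous_rankOne_self.comp_aestronglyMeasurable
        (s.aestronglyMeasurable_fun_sum fun n _ => (hψ n).aestronglyMeasurable.smul_const _)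
    · refine Eventually.of_forall fun s => ae_of_all _ fun x => ?_
      have hbessel : ‖Fs s x‖ ^ 2 ≤ ‖F x‖ ^ 2 := by
        rw [he.norm_sum_smul_sq]
        exact sum_le_hasSum s (fun n _ => sq_nonneg _) (he.hasSum_sq_of_hasSum (hF x))
      rw [norm_rankOne, ← sq]
      exact hbessel.trans (pow_le_pow_left₀ (norm_nonneg _) (hFC x) 2)
    · exact ae_of_all _ fun x => (continuous_rankOne_self.tendsto _).comp (hF x)
  ext u
  have hlim_u := ((ContinuousLinearMap.apply ℝ E u).continuous.tendsto _).comp hlim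
  refine tendsto_nhds_unique hlim_u ((hH u).congr fun s => ?_)
  rw [Function.comp_apply, integral_rankOne_sum_smul_self hψ hψψ]
  simp [smul_smul]

end

theorem expectation_rank_one_eq_kernel_operator_general
    {𝒳 : Type*} [MeasurableSpace 𝒳] (π : Measure 𝒳) [IsProbabilityMeasure π]
    (I : Set ℕ) (φ : I → 𝒳 → ℝ) (lam : I → ℝ) (hlam : ∀ n, 0 ≤ lam n)
    (hmem : ∀ n : I, MemLp (φ n) 2 π)
    (horth : Orthonormal ℝ (fun n : I => (hmem n).toLp (φ n)))
    (h : 𝒳 → 𝒳 → ℝ)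
    (hker : ∀ x y, HasSum (fun n : I => lam n * φ n x * φ n y) (h x y))
    (hbdd : ∃ M : ℝ, ∀ x, h x x ≤ M)
    (f : 𝒳 → Lp ℝ 2 π)
    (hf : ∀ x, HasSum
      (fun n : I => (Real.sqrt (lam n) * φ n x) • (hmem n).toLp (φ n)) (f x))
    (H : Lp ℝ 2 π →L[ℝ] Lp ℝ 2 π)
    (hH : ∀ u : Lp ℝ 2 π, HasSum
      (fun n : I =>
        (lam n * (inner ℝ ((hmem n).toLp (φ n)) u : ℝ)) • (hmem n).toLp (φ n))
      (H u))
    {Ω : Type*} [MeasurableSpace Ω] (ℙ : Measure Ω)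
    (X : Ω → 𝒳) (hX : Measurable X) (hlaw : Measure.map X ℙ = π) :
    ∫ ω, (innerSL ℝ (f (X ω))).smulRight (f (X ω)) ∂ℙ = H := by
  obtain ⟨M, hM⟩ := hbdd
  have hψ : ∀ n, MemLp (fun x => √(lam n) * φ n x) 2 π := fun n => (hmem n).const_mul _
  have hnorm : ∀ x, ‖f x‖ ≤ √M := by
    intro x
    have hsq : ‖f x‖ ^ 2 = h x x := (horth.hasSum_sq_of_hasSum (hf x)).unique <|
      (hker x x).congr_fun fun n => by rw [mul_pow, Real.sq_sqrt (hlam n)]; ring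
    simpa using Real.abs_le_sqrt (hsq.trans_le (hM x))
  have hf_meas : AEStronglyMeasurable f π :=
    aestronglyMeasurable_of_hasSum (fun n => (hψ n).aestronglyMeasurable.smul_const _) hf
  calc ∫ ω, rankOne ℝ (f (X ω)) (f (X ω)) ∂ℙ = ∫ x, rankOne ℝ (f x) (f x) ∂π := by
        have hmap := integral_map (μ := ℙ) (f := fun x => rankOne ℝ (f x) (f x)) hX.aemeasurable
          (by rw [hlaw]; exact continuous_rankOne_self.comp_aestronglyMeasurable hf_meas)
        -- `rw [← hlaw]` in the goal would fail: the type of `f` mentions `π`.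
        rw [hlaw] at hmap
        exact hmap.symm
    _ = H := integral_rankOne_eq_of_hasSum horth hψ
      (integral_sqrt_mul_mul_eq_ite_of_orthonormal_toLp hlam hmem horth) hf hnorm hH

/-- Mercer setup: if `X ~ π`, the Bochner expectation of the random rank-one
operator `f(X) ⊗ f(X)` equals the integral operator `H` with kernel `h`,
i.e. `E[f(X) ⊗ f(X)] = H` where `H u = ∑_n λ_n ⟨φ_n, u⟩ φ_n`. -/
theorem expectation_rank_one_eq_kernel_operator
    {𝒳 : Type*} [MeasurableSpace 𝒳] (π : Measure 𝒳) [IsProbabilityMeasure π]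
    (I : Set ℕ) (φ : I → 𝒳 → ℝ) (lam : I → ℝ) (hlam : ∀ n, 0 ≤ lam n)
    (hlam2 : Summable (fun n : I => lam n ^ 2))
    (hmem : ∀ n : I, MemLp (φ n) 2 π)
    (horth : Orthonormal ℝ (fun n : I => (hmem n).toLp (φ n)))
    (h : 𝒳 → 𝒳 → ℝ)
    (habs : ∀ x y, Summable (fun n : I => |lam n * φ n x * φ n y|))
    (hker : ∀ x y, HasSum (fun n : I => lam n * φ n x * φ n y) (h x y))
    (hbdd : ∃ M : ℝ, ∀ x, h x x ≤ M)
    (f : 𝒳 → Lp ℝ 2 π)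
    (hf : ∀ x, HasSum
      (fun n : I => (Real.sqrt (lam n) * φ n x) • (hmem n).toLp (φ n)) (f x))
    (H : Lp ℝ 2 π →L[ℝ] Lp ℝ 2 π)
    (hH : ∀ u : Lp ℝ 2 π, HasSum
      (fun n : I =>
        (lam n * (inner ℝ ((hmem n).toLp (φ n)) u : ℝ)) • (hmem n).toLp (φ n))
      (H u))
    {Ω : Type*} [MeasurableSpace Ω] (ℙ : Measure Ω) [IsProbabilityMeasure ℙ]
    (X : Ω → 𝒳) (hX : Measurable X) (hlaw : Measure.map X ℙ = π) :
    ∫ ω, (innerSL ℝ (f (X ω))).smulRight (f (X ω)) ∂ℙ = H :=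
  expectation_rank_one_eq_kernel_operator_general π I φ lam hlam hmem horth h hker hbdd f hf H hH ℙ
    X hX hlaw
end

section
/- Bernstein ψ₁ inequality for Banach space valued variables: if U, U_1,...,U_n are i.i.d. mean-zero random variables in a Banach space with ‖U‖_{ψ₁} < ∞, then for all t > 0, P( | ‖∑_{i=1}^n U_i‖ − E‖∑_{i=1}^n U_i‖ | ≥ t ) ≤ 2 exp( −c min( t²/(n‖U‖²_{ψ₁}), t/‖U‖_{ψ₁} ) ) for a universal constant c > 0. -/
/-!
View `f x = ‖∑ i, x i‖` on `Bⁿ` under the product law: changing one coordinate from `u` to `v`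
moves `f` by at most `‖u - v‖`. Integrating out one coordinate at a time (Fubini), each step is a
1-Lipschitz function `F` of a single ψ₁ variable, and `eᶻ ≤ 1 + z + z² e^{|z|}` bounds the
moment generating function of `F - E F` by `exp (96 s² ρ²)` for `|s| ≤ 1 / (2ρ)`, where
`E exp (‖U‖ / ρ) ≤ 2`. Multiplying the `n` factors and applying Chernoff's bound with an
optimised `s` to both tails gives the estimate. Independence identifies the law of
`(U₀, …, Uₙ₋₁)` with the product law, and `ρ` can be taken at most `2 ‖U‖_{ψ₁}`, which costs
the factor `4` between the constants `1 / 384` and `1 / 1536`.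
-/

open MeasureTheory
open scoped BigOperators

/-- The Orlicz `ψ₁` norm. -/
noncomputable def psiOneNorm {Ω B : Type*} [MeasurableSpace Ω] (ℙ : Measure Ω)
    [NormedAddCommGroup B] (X : Ω → B) : ℝ :=
  sInf {ρ : ℝ | 0 < ρ ∧ ∫ ω, Real.exp (‖X ω‖ / ρ) ∂ℙ ≤ 2}

section

open Real ProbabilityTheory

lemma Real.exp_le_one_add_add_sq_mul_exp_abs (z : ℝ) : exp z ≤ 1 + z + z ^ 2 * exp |z| := by
  rcases le_or_gt |z| 1 with h | h
  · have h1 : exp z - 1 - z ≤ z ^ 2 := (abs_le.1 (abs_exp_sub_one_sub_id_le h)).2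
    nlinarith [one_le_exp (abs_nonneg z), sq_nonneg z]
  rcases le_or_gt 0 z with hz | hz
  · rw [abs_of_nonneg hz] at h ⊢
    nlinarith [mul_nonneg (by nlinarith : (0 : ℝ) ≤ z ^ 2 - 1) (exp_pos z).le]
  · rw [abs_of_neg hz] at h
    nlinarith [exp_le_one_iff.2 hz.le, one_le_exp (abs_nonneg z)]

lemma Real.sq_mul_exp_half_le {s : ℝ} (hs : 0 ≤ s) : s ^ 2 * exp (s / 2) ≤ 16 * exp s := by
  have h4 : s / 4 ≤ exp (s / 4) := by linarith [add_one_le_exp (s / 4)]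
  have hsq : s ^ 2 ≤ 16 * exp (s / 2) := by
    have : exp (s / 4) ^ 2 = exp (s / 2) := by rw [← exp_nat_mul]; ring_nf
    nlinarith [pow_le_pow_left₀ (by positivity) h4 2]
  calc s ^ 2 * exp (s / 2) ≤ 16 * exp (s / 2) * exp (s / 2) := by gcongr
    _ = 16 * exp s := by rw [mul_assoc, ← exp_add, add_halves]

-- `a` stands for `‖y‖` and `m` for the mean norm `∫ ‖v‖ ∂μ ≤ ρ`.
lemma Real.add_sq_mul_exp_le {ρ m a : ℝ} (hρ : 0 < ρ) (hm : 0 ≤ m) (hmρ : m ≤ ρ) (ha : 0 ≤ a) :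
    (a + m) ^ 2 * exp ((a + m) / (2 * ρ)) ≤ 48 * ρ ^ 2 * exp (a / ρ) := by
  have hs := sq_mul_exp_half_le (div_nonneg (add_nonneg ha hm) hρ.le)
  have hm3 : exp (m / ρ) ≤ 3 :=
    (exp_le_exp.2 ((div_le_one hρ).2 hmρ)).trans (by linarith [exp_one_lt_d9])
  calc (a + m) ^ 2 * exp ((a + m) / (2 * ρ))
      = ρ ^ 2 * (((a + m) / ρ) ^ 2 * exp ((a + m) / ρ / 2)) := by
        field_simp
    _ ≤ ρ ^ 2 * (16 * (exp (a / ρ) * exp (m / ρ))) := by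
        rw [← exp_add, ← add_div]; gcongr
    _ ≤ 48 * ρ ^ 2 * exp (a / ρ) := by
        nlinarith [exp_pos (a / ρ), sq_nonneg ρ, mul_le_mul_of_nonneg_left hm3
          (mul_nonneg (sq_nonneg ρ) (exp_pos (a / ρ)).le)]

lemma exists_neg_mul_add_sq_le {n ρ t : ℝ} (hn : 0 < n) (hρ : 0 < ρ) (ht : 0 < t) :
    ∃ s, 0 < s ∧ s ≤ 1 / (2 * ρ) ∧
      -s * t + 96 * n * s ^ 2 * ρ ^ 2 ≤ -(1 / 384) * min (t ^ 2 / (n * ρ ^ 2)) (t / ρ) := by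
  rcases le_or_gt (t / (192 * n * ρ ^ 2)) (1 / (2 * ρ)) with hsmall | hlarge
  · refine ⟨t / (192 * n * ρ ^ 2), by positivity, hsmall, ?_⟩
    calc -(t / (192 * n * ρ ^ 2)) * t + 96 * n * (t / (192 * n * ρ ^ 2)) ^ 2 * ρ ^ 2
        = -(1 / 384) * (t ^ 2 / (n * ρ ^ 2)) := by field_simp; ring
      _ ≤ _ := mul_le_mul_of_nonpos_left (min_le_left _ _) (by norm_num)
  · refine ⟨1 / (2 * ρ), by positivity, le_rfl, ?_⟩
    have hnρ : 96 * n * ρ < t := by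
      rw [div_lt_div_iff₀ (by positivity) (by positivity)] at hlarge; nlinarith
    have htρ : 0 < t / ρ := by positivity
    calc -(1 / (2 * ρ)) * t + 96 * n * (1 / (2 * ρ)) ^ 2 * ρ ^ 2
        = -(t / ρ) / 2 + (96 * n * ρ) / ρ / 4 := by field_simp; ring
      _ ≤ -(t / ρ) / 2 + (t / ρ) / 4 := by gcongr
      _ ≤ -(1 / 384) * (t / ρ) := by linarith
      _ ≤ _ := mul_le_mul_of_nonpos_left (min_le_right _ _) (by norm_num)

lemma exp_neg_min_le_of_le_two_mul {n ρ ρ₀ t : ℝ} (hn : 0 < n) (hρ : 0 < ρ) (hρρ₀ : ρ ≤ 2 * ρ₀)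
    (ht : 0 < t) :
    exp (-(1 / 384) * min (t ^ 2 / (n * ρ ^ 2)) (t / ρ)) ≤
      exp (-(1 / 1536) * min (t ^ 2 / (n * ρ₀ ^ 2)) (t / ρ₀)) := by
  have hρ₀ : 0 < ρ₀ := by linarith
  have hsq : t ^ 2 / (n * ρ₀ ^ 2) ≤ 4 * (t ^ 2 / (n * ρ ^ 2)) :=
    calc t ^ 2 / (n * ρ₀ ^ 2) = 4 * (t ^ 2 / (n * (2 * ρ₀) ^ 2)) := by field_simp; ring
      _ ≤ 4 * (t ^ 2 / (n * ρ ^ 2)) := by gcongr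
  have hlin : t / ρ₀ ≤ 4 * (t / ρ) :=
    calc t / ρ₀ = 2 * (t / (2 * ρ₀)) := by field_simp
      _ ≤ 4 * (t / ρ) := by gcongr; norm_num
  have hmin : min (t ^ 2 / (n * ρ₀ ^ 2)) (t / ρ₀) ≤ 4 * min (t ^ 2 / (n * ρ ^ 2)) (t / ρ) := by
    rw [mul_min_of_nonneg _ _ (by norm_num)]; exact min_le_min hsq hlin
  rw [exp_le_exp]
  linarith

lemma integral_exp_le_exp_integral_sq_mul_exp_abs {Ω : Type*} [MeasurableSpace Ω]
    {μ : Measure Ω} [IsProbabilityMeasure μ] {Z : Ω → ℝ} (hZ : Integrable Z μ)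
    (hZ0 : ∫ ω, Z ω ∂μ = 0) (hV : Integrable (fun ω => Z ω ^ 2 * exp |Z ω|) μ) :
    ∫ ω, exp (Z ω) ∂μ ≤ exp (∫ ω, Z ω ^ 2 * exp |Z ω| ∂μ) := by
  calc ∫ ω, exp (Z ω) ∂μ ≤ ∫ ω, (1 + Z ω + Z ω ^ 2 * exp |Z ω|) ∂μ :=
        integral_mono_of_nonneg (.of_forall fun ω => (exp_pos _).le)
          (((integrable_const 1).add hZ).add hV)
          (.of_forall fun ω => exp_le_one_add_add_sq_mul_exp_abs (Z ω))
    _ = 1 + ∫ ω, Z ω ^ 2 * exp |Z ω| ∂μ := by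
        have h1Z : Integrable (fun ω => 1 + Z ω) μ := (integrable_const 1).add hZ
        rw [integral_add h1Z hV, integral_add (integrable_const 1) hZ, hZ0]
        simp
    _ ≤ exp (∫ ω, Z ω ^ 2 * exp |Z ω| ∂μ) := by
        linarith [add_one_le_exp (∫ ω, Z ω ^ 2 * exp |Z ω| ∂μ)]

lemma abs_norm_sum_sub_norm_sum_le {ι B : Type*} [Fintype ι] [NormedAddCommGroup B]
    (x y : ι → B) : |‖∑ i, x i‖ - ‖∑ i, y i‖| ≤ ∑ i, ‖x i - y i‖ :=
  (abs_norm_sub_norm_le _ _).trans (by rw [← Finset.sum_sub_distrib]; exact norm_sum_le _ _)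

lemma lipschitzWith_card_of_abs_sub_le_sum_norm {ι B : Type*} [Fintype ι] [NormedAddCommGroup B]
    {G : (ι → B) → ℝ} (hG : ∀ x y, |G x - G y| ≤ ∑ i, ‖x i - y i‖) :
    LipschitzWith (Fintype.card ι) G := by
  refine LipschitzWith.of_dist_le_mul fun x y => ?_
  calc dist (G x) (G y) ≤ ∑ i, dist (x i) (y i) := by
        simpa [Real.dist_eq, dist_eq_norm] using hG x y
    _ ≤ ∑ _i : ι, dist x y := Finset.sum_le_sum fun i _ => dist_le_pi_dist x y i
    _ = Fintype.card ι * dist x y := by simp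

lemma lipschitzWith_one_fin_cons {B : Type*} [NormedAddCommGroup B] {n : ℕ}
    {G : (Fin (n + 1) → B) → ℝ} (hG : ∀ x y, |G x - G y| ≤ ∑ i, ‖x i - y i‖) (x : Fin n → B) :
    LipschitzWith 1 fun u => G (Fin.cons u x) :=
  LipschitzWith.of_dist_le_mul fun u v => by
    simpa [Real.dist_eq, dist_eq_norm, Fin.sum_univ_succ] using hG (Fin.cons u x) (Fin.cons v x)

lemma integral_pi_fin_succ {α E : Type*} [MeasurableSpace α] [NormedAddCommGroup E]
    [NormedSpace ℝ E] {μ : Measure α} [SigmaFinite μ] {n : ℕ} {f : (Fin (n + 1) → α) → E}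
    (hf : Integrable f (Measure.pi fun _ => μ)) :
    ∫ x, f x ∂(Measure.pi fun _ => μ) =
      ∫ x, ∫ y, f (Fin.cons y x) ∂μ ∂(Measure.pi fun _ : Fin n => μ) := by
  set e := (MeasurableEquiv.piFinSuccAbove (fun _ : Fin (n + 1) => α) 0).symm
  have he : MeasurePreserving e (μ.prod (Measure.pi fun _ => μ)) (Measure.pi fun _ => μ) :=
    (measurePreserving_piFinSuccAbove (fun _ : Fin (n + 1) => μ) 0).symm
  have hcons : ∀ p, e p = Fin.cons p.1 p.2 := fun p => by
    simp [e, MeasurableEquiv.piFinSuccAbove_symm_apply, Fin.insertNthEquiv, Fin.insertNth_zero']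
  have hfe : Integrable (fun p => f (e p)) (μ.prod (Measure.pi fun _ => μ)) :=
    (he.integrable_comp_emb e.measurableEmbedding).2 hf
  rw [← he.integral_comp', integral_prod_symm _ hfe]
  simp only [hcons]

section OneCoordinate

variable {B : Type*} [NormedAddCommGroup B] [MeasurableSpace B] [OpensMeasurableSpace B]
  {μ : Measure B} {ρ : ℝ}

lemma integrable_norm_of_integrable_exp_norm_div (hρ : 0 < ρ)
    (hInt : Integrable (fun x => exp (‖x‖ / ρ)) μ) : Integrable (fun x : B => ‖x‖) μ := by
  refine (hInt.const_mul ρ).mono' measurable_norm.aestronglyMeasurable (.of_forall fun x => ?_)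
  rw [norm_norm]
  calc ‖x‖ = ρ * (‖x‖ / ρ) := by field_simp
    _ ≤ ρ * exp (‖x‖ / ρ) := by gcongr; linarith [add_one_le_exp (‖x‖ / ρ)]

lemma integral_norm_le_of_integral_exp_norm_div_le_two [IsProbabilityMeasure μ] (hρ : 0 < ρ)
    (hInt : Integrable (fun x => exp (‖x‖ / ρ)) μ) (h2 : ∫ x, exp (‖x‖ / ρ) ∂μ ≤ 2) :
    ∫ x, ‖x‖ ∂μ ≤ ρ := by
  calc ∫ x, ‖x‖ ∂μ ≤ ∫ x, ρ * (exp (‖x‖ / ρ) - 1) ∂μ := by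
        refine integral_mono (integrable_norm_of_integrable_exp_norm_div hρ hInt)
          ((hInt.sub (integrable_const 1)).const_mul ρ) fun x => ?_
        have := add_one_le_exp (‖x‖ / ρ)
        calc ‖x‖ = ρ * (‖x‖ / ρ) := by field_simp
          _ ≤ ρ * (exp (‖x‖ / ρ) - 1) := by gcongr; linarith
    _ = ρ * (∫ x, exp (‖x‖ / ρ) ∂μ - 1) := by
        rw [integral_const_mul, integral_sub hInt (integrable_const 1)]; simp
    _ ≤ ρ := by nlinarith

lemma LipschitzWith.integrable_of_integrable_norm [IsFiniteMeasure μ] {K : NNReal} {F : B → ℝ}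
    (hF : LipschitzWith K F) (hμ : Integrable (fun x => ‖x‖) μ) : Integrable F μ := by
  refine ((integrable_const ‖F 0‖).add (hμ.const_mul K)).mono'
    hF.continuous.aestronglyMeasurable (.of_forall fun x => ?_)
  have := hF.norm_sub_le x 0
  rw [sub_zero] at this
  simp only [Pi.add_apply]
  linarith [norm_le_insert' (F x) (F 0)]

lemma LipschitzWith.abs_sub_integral_le [IsProbabilityMeasure μ] {F : B → ℝ}
    (hF : LipschitzWith 1 F) (hμ : Integrable (fun x => ‖x‖) μ) (y : B) :
    |F y - ∫ v, F v ∂μ| ≤ ‖y‖ + ∫ v, ‖v‖ ∂μ := by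
  have hFi := hF.integrable_of_integrable_norm hμ
  calc |F y - ∫ v, F v ∂μ| = |∫ v, (F y - F v) ∂μ| := by
        rw [integral_sub (integrable_const _) hFi]; simp
    _ ≤ ∫ v, (‖y‖ + ‖v‖) ∂μ := by
        refine abs_integral_le_integral_abs.trans (integral_mono ((integrable_const _).sub hFi).abs
          ((integrable_const _).add hμ) fun v => ?_)
        have := hF.dist_le_mul y v
        rw [Real.dist_eq, dist_eq_norm, NNReal.coe_one, one_mul] at this
        exact this.trans (_root_.norm_sub_le y v)
    _ = ‖y‖ + ∫ v, ‖v‖ ∂μ := by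
        rw [integral_add (integrable_const _) hμ]; simp

lemma LipschitzWith.sq_mul_exp_abs_le [IsProbabilityMeasure μ] (hρ : 0 < ρ)
    (hInt : Integrable (fun x => exp (‖x‖ / ρ)) μ) (h2 : ∫ x, exp (‖x‖ / ρ) ∂μ ≤ 2)
    {F : B → ℝ} (hF : LipschitzWith 1 F) {s : ℝ} (hs : |s| ≤ 1 / (2 * ρ)) (y : B) :
    (s * (F y - ∫ v, F v ∂μ)) ^ 2 * exp |s * (F y - ∫ v, F v ∂μ)| ≤
      s ^ 2 * (48 * ρ ^ 2 * exp (‖y‖ / ρ)) := by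
  have hμ := integrable_norm_of_integrable_exp_norm_div hρ hInt
  set m := ∫ v, ‖v‖ ∂μ
  have hm0 : 0 ≤ m := integral_nonneg fun _ => norm_nonneg _
  have hmρ : m ≤ ρ := integral_norm_le_of_integral_exp_norm_div_le_two hρ hInt h2
  have hZ : |s * (F y - ∫ v, F v ∂μ)| ≤ |s| * (‖y‖ + m) := by
    rw [abs_mul]; gcongr; exact hF.abs_sub_integral_le hμ y
  calc (s * (F y - ∫ v, F v ∂μ)) ^ 2 * exp |s * (F y - ∫ v, F v ∂μ)|
      ≤ (|s| * (‖y‖ + m)) ^ 2 * exp ((‖y‖ + m) / (2 * ρ)) := by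
        rw [← sq_abs]
        gcongr
        calc _ ≤ |s| * (‖y‖ + m) := hZ
          _ ≤ 1 / (2 * ρ) * (‖y‖ + m) := by gcongr
          _ = (‖y‖ + m) / (2 * ρ) := by ring
    _ = s ^ 2 * ((‖y‖ + m) ^ 2 * exp ((‖y‖ + m) / (2 * ρ))) := by rw [mul_pow, sq_abs]; ring
    _ ≤ s ^ 2 * (48 * ρ ^ 2 * exp (‖y‖ / ρ)) :=
        mul_le_mul_of_nonneg_left (add_sq_mul_exp_le hρ hm0 hmρ (norm_nonneg y)) (sq_nonneg s)

lemma LipschitzWith.mgf_sub_integral_le [IsProbabilityMeasure μ] (hρ : 0 < ρ)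
    (hInt : Integrable (fun x => exp (‖x‖ / ρ)) μ) (h2 : ∫ x, exp (‖x‖ / ρ) ∂μ ≤ 2)
    {F : B → ℝ} (hF : LipschitzWith 1 F) {s : ℝ} (hs : |s| ≤ 1 / (2 * ρ)) :
    mgf (fun y => F y - ∫ v, F v ∂μ) μ s ≤ exp (96 * s ^ 2 * ρ ^ 2) := by
  have hFi := hF.integrable_of_integrable_norm (integrable_norm_of_integrable_exp_norm_div hρ hInt)
  set Z : B → ℝ := fun y => s * (F y - ∫ v, F v ∂μ)
  have hZ : Continuous Z := continuous_const.mul (hF.continuous.sub continuous_const)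
  have hdomInt : Integrable (fun y => s ^ 2 * (48 * ρ ^ 2 * exp (‖y‖ / ρ))) μ :=
    (hInt.const_mul _).const_mul _
  have hV : Integrable (fun y => Z y ^ 2 * exp |Z y|) μ :=
    hdomInt.mono' ((hZ.pow 2).mul (continuous_exp.comp hZ.abs)).aestronglyMeasurable
      (.of_forall fun y => by
        rw [Real.norm_of_nonneg (by positivity)]; exact hF.sq_mul_exp_abs_le hρ hInt h2 hs y)
  have hZ0 : ∫ y, Z y ∂μ = 0 := by
    simp only [Z, integral_const_mul, integral_sub hFi (integrable_const _)]
    simp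
  calc mgf (fun y => F y - ∫ v, F v ∂μ) μ s = ∫ y, exp (Z y) ∂μ := rfl
    _ ≤ exp (∫ y, Z y ^ 2 * exp |Z y| ∂μ) :=
        integral_exp_le_exp_integral_sq_mul_exp_abs
          ((hFi.sub (integrable_const _)).const_mul s) hZ0 hV
    _ ≤ exp (96 * s ^ 2 * ρ ^ 2) := by
        gcongr
        calc ∫ y, Z y ^ 2 * exp |Z y| ∂μ ≤ ∫ y, s ^ 2 * (48 * ρ ^ 2 * exp (‖y‖ / ρ)) ∂μ :=
              integral_mono hV hdomInt (hF.sq_mul_exp_abs_le hρ hInt h2 hs)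
          _ = s ^ 2 * (48 * ρ ^ 2 * ∫ y, exp (‖y‖ / ρ) ∂μ) := by
              rw [integral_const_mul, integral_const_mul]
          _ ≤ s ^ 2 * (48 * ρ ^ 2 * 2) := by gcongr
          _ = 96 * s ^ 2 * ρ ^ 2 := by ring

lemma abs_integral_fin_cons_sub_le [IsProbabilityMeasure μ] (hμ : Integrable (fun x => ‖x‖) μ)
    {n : ℕ} {G : (Fin (n + 1) → B) → ℝ} (hG : ∀ x y, |G x - G y| ≤ ∑ i, ‖x i - y i‖)
    (x y : Fin n → B) :
    |∫ u, G (Fin.cons u x) ∂μ - ∫ u, G (Fin.cons u y) ∂μ| ≤ ∑ i, ‖x i - y i‖ := by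
  have hx := (lipschitzWith_one_fin_cons hG x).integrable_of_integrable_norm hμ
  have hy := (lipschitzWith_one_fin_cons hG y).integrable_of_integrable_norm hμ
  rw [← integral_sub hx hy]
  calc |∫ u, (G (Fin.cons u x) - G (Fin.cons u y)) ∂μ|
      ≤ ∫ _u, ∑ i, ‖x i - y i‖ ∂μ :=
        abs_integral_le_integral_abs.trans (integral_mono (hx.sub hy).abs (integrable_const _)
          fun u => by simpa [Fin.sum_univ_succ] using hG (Fin.cons u x) (Fin.cons u y))
    _ = ∑ i, ‖x i - y i‖ := by simp

lemma integral_exp_fin_cons_le [IsProbabilityMeasure μ] (hρ : 0 < ρ)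
    (hInt : Integrable (fun x => exp (‖x‖ / ρ)) μ) (h2 : ∫ x, exp (‖x‖ / ρ) ∂μ ≤ 2) {s : ℝ}
    (hs : |s| ≤ 1 / (2 * ρ)) {n : ℕ} {G : (Fin (n + 1) → B) → ℝ}
    (hG : ∀ x y, |G x - G y| ≤ ∑ i, ‖x i - y i‖) (c : ℝ) (x : Fin n → B) :
    ∫ u, exp (s * (G (Fin.cons u x) - c)) ∂μ ≤
      exp (s * (∫ u, G (Fin.cons u x) ∂μ - c)) * exp (96 * s ^ 2 * ρ ^ 2) :=
  calc ∫ u, exp (s * (G (Fin.cons u x) - c)) ∂μ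
      = exp (s * (∫ u, G (Fin.cons u x) ∂μ - c)) *
          mgf (fun u => G (Fin.cons u x) - ∫ v, G (Fin.cons v x) ∂μ) μ s := by
        rw [mgf, ← integral_const_mul]
        congr 1 with u
        rw [← exp_add]; ring_nf
    _ ≤ exp (s * (∫ u, G (Fin.cons u x) ∂μ - c)) * exp (96 * s ^ 2 * ρ ^ 2) := by
        gcongr; exact (lipschitzWith_one_fin_cons hG x).mgf_sub_integral_le hρ hInt h2 hs

end OneCoordinate

section ProductSpace

variable {B : Type*} [NormedAddCommGroup B] [MeasurableSpace B] [OpensMeasurableSpace B]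
  [SecondCountableTopology B] {μ : Measure B} [IsProbabilityMeasure μ] {ρ : ℝ}

lemma integrable_norm_pi {ι : Type*} [Fintype ι] (hμ : Integrable (fun x => ‖x‖) μ) :
    Integrable (fun x : ι → B => ‖x‖) (Measure.pi fun _ => μ) := by
  have hcoord : ∀ i, Integrable (fun x : ι → B => ‖x i‖) (Measure.pi fun _ => μ) := fun i =>
    (measurePreserving_eval (fun _ => μ) i).integrable_comp_of_integrable hμ
  refine (integrable_finsetSum Finset.univ fun i _ => hcoord i).mono'
    continuous_norm.aestronglyMeasurable (.of_forall fun x => ?_)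
  rw [norm_norm]
  exact (pi_norm_le_iff_of_nonneg (Finset.sum_nonneg fun i _ => norm_nonneg _)).2 fun i =>
    Finset.single_le_sum (f := fun j => ‖x j‖) (fun j _ => norm_nonneg _) (Finset.mem_univ i)

lemma integrable_exp_mul_sub_of_abs_sub_le_sum_norm {ι : Type*} [Fintype ι] (hρ : 0 < ρ)
    (hInt : Integrable (fun x => exp (‖x‖ / ρ)) μ) {G : (ι → B) → ℝ}
    (hG : ∀ x y, |G x - G y| ≤ ∑ i, ‖x i - y i‖) {s : ℝ} (hs : |s| ≤ 1 / ρ) (c : ℝ) :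
    Integrable (fun x => exp (s * (G x - c))) (Measure.pi fun _ => μ) := by
  have hprod : Integrable (fun x : ι → B => ∏ i, exp (‖x i‖ / ρ)) (Measure.pi fun _ => μ) :=
    Integrable.fintype_prod fun _ => hInt
  have hGc := (lipschitzWith_card_of_abs_sub_le_sum_norm hG).continuous
  refine (hprod.const_mul (exp (s * (G 0 - c)))).mono'
    (continuous_exp.comp (continuous_const.mul (hGc.sub continuous_const))).aestronglyMeasurable
    (.of_forall fun x => ?_)
  rw [Real.norm_of_nonneg (exp_pos _).le, ← exp_sum, ← exp_add, exp_le_exp]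
  have h0 : |G x - G 0| ≤ ∑ i, ‖x i‖ := by simpa using hG x 0
  have : s * (G x - G 0) ≤ ∑ i, ‖x i‖ / ρ :=
    calc s * (G x - G 0) ≤ |s| * |G x - G 0| := by rw [← abs_mul]; exact le_abs_self _
      _ ≤ 1 / ρ * ∑ i, ‖x i‖ := by gcongr
      _ = ∑ i, ‖x i‖ / ρ := by rw [Finset.mul_sum]; simp [div_eq_inv_mul]
  linarith

theorem mgf_sub_integral_pi_le (hρ : 0 < ρ) (hInt : Integrable (fun x => exp (‖x‖ / ρ)) μ)
    (h2 : ∫ x, exp (‖x‖ / ρ) ∂μ ≤ 2) {s : ℝ} (hs : |s| ≤ 1 / (2 * ρ)) {n : ℕ}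
    {G : (Fin n → B) → ℝ} (hG : ∀ x y, |G x - G y| ≤ ∑ i, ‖x i - y i‖) :
    mgf (fun x => G x - ∫ x', G x' ∂(Measure.pi fun _ => μ)) (Measure.pi fun _ => μ) s ≤
      exp (96 * n * s ^ 2 * ρ ^ 2) := by
  induction n with
  | zero =>
    have hG0 : G = fun _ => G default := funext fun x => congrArg G (Subsingleton.elim x default)
    rw [hG0]
    simp [mgf]
  | succ n ih =>
    have hμ := integrable_norm_of_integrable_exp_norm_div hρ hInt
    have hs' : |s| ≤ 1 / ρ := hs.trans (by gcongr; linarith)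
    set G' : (Fin n → B) → ℝ := fun x => ∫ u, G (Fin.cons u x) ∂μ
    have hG' : ∀ x y, |G' x - G' y| ≤ ∑ i, ‖x i - y i‖ := abs_integral_fin_cons_sub_le hμ hG
    set c := ∫ x, G x ∂(Measure.pi fun _ => μ)
    have hc : c = ∫ x, G' x ∂(Measure.pi fun _ => μ) := integral_pi_fin_succ <|
      (lipschitzWith_card_of_abs_sub_le_sum_norm hG).integrable_of_integrable_norm
        (integrable_norm_pi hμ)
    calc mgf (fun x => G x - c) (Measure.pi fun _ => μ) s
        = ∫ x, ∫ u, exp (s * (G (Fin.cons u x) - c)) ∂μ ∂(Measure.pi fun _ => μ) :=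
          integral_pi_fin_succ (integrable_exp_mul_sub_of_abs_sub_le_sum_norm hρ hInt hG hs' c)
      _ ≤ ∫ x, exp (s * (G' x - c)) * exp (96 * s ^ 2 * ρ ^ 2) ∂(Measure.pi fun _ => μ) :=
          integral_mono_of_nonneg (.of_forall fun x => integral_nonneg fun u => (exp_pos _).le)
            ((integrable_exp_mul_sub_of_abs_sub_le_sum_norm hρ hInt hG' hs' c).mul_const _)
            (.of_forall (integral_exp_fin_cons_le hρ hInt h2 hs hG c))
      _ = mgf (fun x => G' x - c) (Measure.pi fun _ => μ) s * exp (96 * s ^ 2 * ρ ^ 2) :=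
          integral_mul_const _ _
      _ ≤ exp (96 * n * s ^ 2 * ρ ^ 2) * exp (96 * s ^ 2 * ρ ^ 2) := by
          rw [hc]; gcongr; exact ih hG'
      _ = exp (96 * ↑(n + 1) * s ^ 2 * ρ ^ 2) := by rw [← exp_add]; push_cast; ring_nf

theorem measureReal_abs_sub_integral_pi_ge_le (hρ : 0 < ρ)
    (hInt : Integrable (fun x => exp (‖x‖ / ρ)) μ) (h2 : ∫ x, exp (‖x‖ / ρ) ∂μ ≤ 2) {n : ℕ}
    (hn : 0 < n) {G : (Fin n → B) → ℝ} (hG : ∀ x y, |G x - G y| ≤ ∑ i, ‖x i - y i‖) {t : ℝ}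
    (ht : 0 < t) :
    (Measure.pi fun _ => μ).real {x | t ≤ |G x - ∫ x', G x' ∂(Measure.pi fun _ => μ)|} ≤
      2 * exp (-(1 / 384) * min (t ^ 2 / (n * ρ ^ 2)) (t / ρ)) := by
  set P := Measure.pi fun _ : Fin n => μ
  set X := fun x => G x - ∫ x', G x' ∂P
  obtain ⟨s, hs0, hsρ, hval⟩ := exists_neg_mul_add_sq_le (Nat.cast_pos.2 hn) hρ ht
  have hs : |s| ≤ 1 / (2 * ρ) := by rwa [abs_of_pos hs0]
  have hint : ∀ s', |s'| ≤ 1 / (2 * ρ) → Integrable (fun x => exp (s' * X x)) P := fun s' h =>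
    integrable_exp_mul_sub_of_abs_sub_le_sum_norm hρ hInt hG (h.trans (by gcongr; linarith)) _
  have hupper : P.real {x | t ≤ X x} ≤ exp (-s * t + 96 * n * s ^ 2 * ρ ^ 2) :=
    calc P.real {x | t ≤ X x} ≤ exp (-s * t) * mgf X P s :=
          measure_ge_le_exp_mul_mgf t hs0.le (hint s hs)
      _ ≤ exp (-s * t) * exp (96 * n * s ^ 2 * ρ ^ 2) := by
          gcongr; exact mgf_sub_integral_pi_le hρ hInt h2 hs hG
      _ = _ := by rw [← exp_add]
  have hlower : P.real {x | X x ≤ -t} ≤ exp (-s * t + 96 * n * s ^ 2 * ρ ^ 2) :=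
    calc P.real {x | X x ≤ -t} ≤ exp (-(-s) * -t) * mgf X P (-s) :=
          measure_le_le_exp_mul_mgf (-t) (by linarith) (hint (-s) (by rwa [abs_neg]))
      _ ≤ exp (-(-s) * -t) * exp (96 * n * (-s) ^ 2 * ρ ^ 2) := by
          gcongr; exact mgf_sub_integral_pi_le hρ hInt h2 (by rwa [abs_neg]) hG
      _ = _ := by rw [← exp_add]; ring_nf
  calc P.real {x | t ≤ |X x|} ≤ P.real ({x | t ≤ X x} ∪ {x | X x ≤ -t}) :=
        measureReal_mono fun x (hx : t ≤ |X x|) => (le_abs'.1 hx).symm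
    _ ≤ P.real {x | t ≤ X x} + P.real {x | X x ≤ -t} := measureReal_union_le _ _
    _ ≤ 2 * exp (-s * t + 96 * n * s ^ 2 * ρ ^ 2) := by linarith
    _ ≤ _ := by gcongr

end ProductSpace

section PsiOneNorm

variable {Ω B : Type*} [MeasurableSpace Ω] {μ : Measure Ω} [NormedAddCommGroup B] {X : Ω → B}

lemma psiOneNorm_nonneg : 0 ≤ psiOneNorm μ X := Real.sInf_nonneg fun _ h => h.1.le

lemma exists_radius_le_two_mul_psiOneNorm [MeasurableSpace B] [OpensMeasurableSpace B]
    (hX : AEMeasurable X μ) (hpos : 0 < psiOneNorm μ X)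
    (hne : {ρ : ℝ | 0 < ρ ∧ ∫ ω, exp (‖X ω‖ / ρ) ∂μ ≤ 2}.Nonempty) :
    ∃ ρ, 0 < ρ ∧ ρ ≤ 2 * psiOneNorm μ X ∧ Integrable (fun x => exp (‖x‖ / ρ)) (μ.map X) ∧
      ∫ x, exp (‖x‖ / ρ) ∂(μ.map X) ≤ 2 := by
  have hbdd : BddBelow {ρ : ℝ | 0 < ρ ∧ ∫ ω, exp (‖X ω‖ / ρ) ∂μ ≤ 2} := ⟨0, fun _ h => h.1.le⟩
  obtain ⟨ρ, ⟨hρ, h2⟩, hlt⟩ :=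
    exists_lt_of_csInf_lt hne (by linarith : psiOneNorm μ X < 2 * psiOneNorm μ X)
  have hmeas : ∀ σ, AEStronglyMeasurable (fun x : B => exp (‖x‖ / σ)) (μ.map X) := fun σ =>
    (measurable_norm.div_const σ).exp.aestronglyMeasurable
  -- A non-integrable `exp (‖X‖ / ρ)` has Bochner integral `0`, so every smaller radius would
  -- qualify and the infimum would vanish.
  have hInt : Integrable (fun ω => exp (‖X ω‖ / ρ)) μ := by
    by_contra hnot
    set σ := min (psiOneNorm μ X / 2) ρ
    have hσ : 0 < σ := lt_min (by linarith) hρ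
    have hσnot : ¬ Integrable (fun ω => exp (‖X ω‖ / σ)) μ := fun hσInt =>
      hnot (hσInt.mono' (hX.norm.div_const ρ).exp.aestronglyMeasurable (.of_forall fun ω => by
        rw [Real.norm_of_nonneg (exp_pos _).le, exp_le_exp]
        exact div_le_div_of_nonneg_left (norm_nonneg _) hσ (min_le_right _ _)))
    have : psiOneNorm μ X ≤ σ := csInf_le hbdd ⟨hσ, by rw [integral_undef hσnot]; norm_num⟩
    linarith [min_le_left (psiOneNorm μ X / 2) ρ]
  refine ⟨ρ, hρ, hlt.le, (integrable_map_measure (hmeas ρ) hX).2 hInt, ?_⟩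
  rwa [integral_map hX (hmeas ρ)]

end PsiOneNorm

lemma map_fun_fin_eq_pi_map {Ω B : Type*} [MeasurableSpace Ω] {μ : Measure Ω}
    [IsProbabilityMeasure μ] [MeasurableSpace B] {U : ℕ → Ω → B} (hU : ∀ i, Measurable (U i))
    (hindep : iIndepFun U μ) (hident : ∀ i, IdentDistrib (U i) (U 0) μ μ) (n : ℕ) :
    μ.map (fun ω (i : Fin n) => U i ω) = Measure.pi fun _ => μ.map (U 0) := by
  have hfin : iIndepFun (fun (i : Fin n) => U i) μ := hindep.precomp Fin.val_injective
  rw [hfin.map_fun_eq_pi_map fun i : Fin n => (hU i).aemeasurable]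
  congr with i : 1
  exact (hident i).map_eq

lemma measureReal_abs_sub_integral_comp_eq {Ω E : Type*} [MeasurableSpace Ω] [MeasurableSpace E]
    {μ : Measure Ω} {X : Ω → E} (hX : Measurable X) {g : E → ℝ} (hg : Measurable g) (t : ℝ) :
    μ.real {ω | t ≤ |g (X ω) - ∫ ω', g (X ω') ∂μ|} =
      (μ.map X).real {x | t ≤ |g x - ∫ x', g x' ∂(μ.map X)|} := by
  have hs : MeasurableSet {x | t ≤ |g x - ∫ x', g x' ∂(μ.map X)|} :=
    measurableSet_le measurable_const (hg.sub measurable_const).abs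
  rw [map_measureReal_apply hX hs, integral_map hX.aemeasurable hg.aestronglyMeasurable]
  rfl

end

/-- Bernstein `ψ₁` inequality for Banach space valued i.i.d. mean-zero random
variables: the norm of the sum concentrates around its mean at rate
`2 exp(−c min(t²/(n‖U‖²_{ψ₁}), t/‖U‖_{ψ₁}))` for a universal constant `c`. -/
theorem bernstein_psi_one_banach :
    ∃ c : ℝ, 0 < c ∧
      ∀ (Ω : Type) [inst : MeasurableSpace Ω] (ℙ : Measure Ω),
        IsProbabilityMeasure ℙ →
      ∀ (B : Type) [instB : NormedAddCommGroup B] [instB2 : NormedSpace ℝ B]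
        [instB3 : MeasurableSpace B] [instB4 : BorelSpace B]
        [instB5 : SecondCountableTopology B] [instB6 : CompleteSpace B],
      ∀ (U : ℕ → Ω → B), (∀ i, Measurable (U i)) →
        @ProbabilityTheory.iIndepFun Ω ℕ _ (fun _ => B) (fun _ => instB3) U ℙ →
        (∀ i, ProbabilityTheory.IdentDistrib (U i) (U 0) ℙ ℙ) →
        Integrable (U 0) ℙ → (∫ ω, U 0 ω ∂ℙ) = 0 →
        {ρ : ℝ | 0 < ρ ∧ ∫ ω, Real.exp (‖U 0 ω‖ / ρ) ∂ℙ ≤ 2}.Nonempty →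
      ∀ (n : ℕ) (t : ℝ), 0 < t →
        (ℙ {ω | t ≤ |‖∑ i ∈ Finset.range n, U i ω‖ -
            ∫ ω', ‖∑ i ∈ Finset.range n, U i ω'‖ ∂ℙ|}).toReal ≤
          2 * Real.exp (-c * min (t ^ 2 / (n * psiOneNorm ℙ (U 0) ^ 2))
            (t / psiOneNorm ℙ (U 0))) := by
  refine ⟨1 / 1536, by norm_num, ?_⟩
  intro Ω _ ℙ _ B _ _ _ _ _ _ U hU hindep hident _ _ hne n t ht
  change ℙ.real _ ≤ _
  set ρ₀ := psiOneNorm ℙ (U 0)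
  rcases (mul_nonneg n.cast_nonneg (sq_nonneg ρ₀)).eq_or_lt with hdeg | hpos
  · -- `t ^ 2 / 0 = 0`, so the bound degenerates to `2`.
    have hmin : min (t ^ 2 / (n * ρ₀ ^ 2)) (t / ρ₀) = 0 := by
      rw [← hdeg, div_zero]; exact min_eq_left (div_nonneg ht.le psiOneNorm_nonneg)
    rw [hmin, mul_zero, Real.exp_zero]
    exact measureReal_le_one.trans (by norm_num)
  have hn : (0 : ℝ) < n := lt_of_le_of_ne n.cast_nonneg fun h => by simp [← h] at hpos
  have hρ₀ : 0 < ρ₀ := lt_of_le_of_ne psiOneNorm_nonneg fun h => by simp [← h] at hpos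
  obtain ⟨ρ, hρ, hρρ₀, hInt, h2⟩ :=
    exists_radius_le_two_mul_psiOneNorm (hU 0).aemeasurable hρ₀ hne
  have := Measure.isProbabilityMeasure_map (μ := ℙ) (hU 0).aemeasurable
  simp only [← Fin.sum_univ_eq_sum_range (fun i => U i _) n]
  rw [measureReal_abs_sub_integral_comp_eq (X := fun ω (i : Fin n) => U i ω)
    (measurable_pi_lambda _ fun i => hU i) (g := fun x => ‖∑ i, x i‖) (by fun_prop),
    map_fun_fin_eq_pi_map hU hindep hident]
  calc _ ≤ 2 * Real.exp (-(1 / 384) * min (t ^ 2 / (n * ρ ^ 2)) (t / ρ)) :=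
        measureReal_abs_sub_integral_pi_ge_le hρ hInt h2 (Nat.cast_pos.1 hn)
          abs_norm_sum_sub_norm_sum_le ht
    _ ≤ _ := mul_le_mul_of_nonneg_left (exp_neg_min_le_of_le_two_mul hn hρ hρρ₀ ht) zero_le_two
end

section
/- Lévy-type inequality of Montgomery–Smith: there is a universal constant C such that for any i.i.d. sequence W_1,...,W_n in a Banach space and any t > 0, P( max_{k ≤ n} ‖∑_{i=1}^k W_i‖ ≥ t ) ≤ C · P( ‖∑_{i=1}^n W_i‖ ≥ t/C ). -/
open MeasureTheory
open scoped BigOperators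

/-!
If `‖S_n‖ ≤ u` with probability at least `3/4`, then by Fubini every partial sum `S_k` has a
center `a_k` with `‖S_k - a_k‖ ≤ u` with probability at least `3/4`. Since the `W_i` are i.i.d.,
the block sum `S_m - S_j` has the law of `S_{m-j}`, so any three such events intersect; this makes
`k ↦ a_k` almost additive (`a_{2j} ≈ 2 a_j`) and almost odd about `n` (`a_k ≈ -a_{n-k}`), which
forces `‖a_k‖ ≤ 9u`. Hence every tail sum `S_n - S_k` satisfies `‖S_n - S_k‖ ≤ 10u` with
probability at least `3/4`, and Ottaviani's inequality bounds `P(max_k ‖S_k‖ ≥ t)` by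
`4/3 · P(‖S_n‖ ≥ t - 10u)`. Take `u = t/30`; if `P(‖S_n‖ ≥ t/30) ≥ 1/4` there is nothing to prove.
-/

section

open ProbabilityTheory

lemma Finset.disjoint_range_Ico (k n : ℕ) : Disjoint (range k) (Ico k n) := by
  rw [range_eq_Ico]
  exact Ico_disjoint_Ico_consecutive 0 k n

lemma norm_le_three_mul_of_norm_sub_add_self_le {E : Type*} [NormedAddCommGroup E]
    [NormedSpace ℝ E] {a : ℕ → E} {n : ℕ} {c : ℝ}
    (hdouble : ∀ j, 2 * j ≤ n → ‖a (2 * j) - (a j + a j)‖ ≤ c)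
    (hreflect : ∀ k ≤ n, ‖a k + a (n - k)‖ ≤ c) :
    ∀ k ≤ n, ‖a k‖ ≤ 3 * c := by
  -- Let `‖a m‖` be maximal; one of `m`, `n - m` is at most `n / 2`.
  obtain ⟨m, hm, hmax⟩ := (Finset.range (n + 1)).exists_max_image (‖a ·‖) ⟨0, by simp⟩
  rw [Finset.mem_range, Nat.lt_succ_iff] at hm
  have hle_max : ∀ k ≤ n, ‖a k‖ ≤ ‖a m‖ := fun k hk => hmax k (by simpa [Nat.lt_succ_iff])
  have hc : 0 ≤ c := (norm_nonneg _).trans (hdouble 0 (by omega))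
  have hhalf : ∀ j, 2 * j ≤ n → 2 * ‖a j‖ ≤ ‖a m‖ + c := fun j hj =>
    calc 2 * ‖a j‖ = ‖a j + a j‖ := by rw [← two_smul ℝ (a j), norm_smul]; norm_num
      _ ≤ ‖a (2 * j)‖ + ‖a (2 * j) - (a j + a j)‖ := norm_le_norm_add_norm_sub _ _
      _ ≤ ‖a m‖ + c := add_le_add (hle_max _ hj) (hdouble j hj)
  intro k hk
  refine (hle_max k hk).trans ?_
  rcases le_or_gt (2 * m) n with hsmall | hlarge
  · linarith [hhalf m hsmall]
  · have hreflect' : ‖a (n - m) + a m‖ ≤ c := by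
      simpa [Nat.sub_sub_self hm] using hreflect (n - m) (Nat.sub_le n m)
    have hsplit : ‖a m‖ ≤ ‖a (n - m) + a m‖ + ‖a (n - m)‖ := by
      simpa using norm_le_norm_add_norm_sub (a (n - m) + a m) (a m)
    linarith [hhalf (n - m) (by omega)]

variable {Ω : Type*} {mΩ : MeasurableSpace Ω} {μ : Measure Ω}

lemma nonempty_inter_inter_of_two_lt_measureReal_add [IsProbabilityMeasure μ] {A B C : Set Ω}
    (hA : MeasurableSet A) (hB : MeasurableSet B) (hC : MeasurableSet C)
    (h : 2 < μ.real A + μ.real B + μ.real C) :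
    (A ∩ B ∩ C).Nonempty := by
  by_contra hempty
  have hcover : Set.univ ⊆ Aᶜ ∪ Bᶜ ∪ Cᶜ := fun ω _ => by
    by_contra hω
    exact hempty ⟨ω, by simpa [not_or] using hω⟩
  have := calc
    1 = μ.real Set.univ := probReal_univ.symm
    _ ≤ μ.real (Aᶜ ∪ Bᶜ ∪ Cᶜ) := measureReal_mono hcover
    _ ≤ μ.real Aᶜ + μ.real Bᶜ + μ.real Cᶜ :=
      (measureReal_union_le _ _).trans (by gcongr; exact measureReal_union_le _ _)
  rw [probReal_compl_eq_one_sub hA, probReal_compl_eq_one_sub hB,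
    probReal_compl_eq_one_sub hC] at this
  linarith

lemma ProbabilityTheory.IndepFun.exists_measureReal_add_mem_le [IsProbabilityMeasure μ]
    {E : Type*} [Add E] [MeasurableSpace E] [MeasurableAdd₂ E] {X Y : Ω → E}
    (hXY : IndepFun X Y μ) (hX : Measurable X) (hY : Measurable Y) {D : Set E}
    (hD : MeasurableSet D) :
    ∃ y, μ.real {ω | X ω + Y ω ∈ D} ≤ μ.real {ω | X ω + y ∈ D} := by
  have hD' : MeasurableSet {p : E × E | p.2 + p.1 ∈ D} := (measurable_snd.add measurable_fst) hD
  have hfubini : μ {ω | X ω + Y ω ∈ D} = ∫⁻ y, μ {ω | X ω + y ∈ D} ∂(μ.map Y) := by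
    calc μ {ω | X ω + Y ω ∈ D} = μ.map (fun ω => (Y ω, X ω)) {p | p.2 + p.1 ∈ D} := by
          rw [Measure.map_apply (hY.prodMk hX) hD']; rfl
      _ = ((μ.map Y).prod (μ.map X)) {p | p.2 + p.1 ∈ D} := by
          rw [hXY.symm.map_prod_eq_prod_map_map hY.aemeasurable hX.aemeasurable]
      _ = ∫⁻ y, μ.map X (Prod.mk y ⁻¹' {p | p.2 + p.1 ∈ D}) ∂(μ.map Y) := Measure.prod_apply hD'
      _ = ∫⁻ y, μ {ω | X ω + y ∈ D} ∂(μ.map Y) := by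
          congr with y
          rw [Measure.map_apply hX (measurable_prodMk_left hD')]; rfl
  have : IsProbabilityMeasure (μ.map Y) := Measure.isProbabilityMeasure_map hY.aemeasurable
  have hfin : ∫⁻ y, μ {ω | X ω + y ∈ D} ∂(μ.map Y) ≠ ⊤ :=
    ((lintegral_mono fun _ => prob_le_one).trans_lt (by simp)).ne
  obtain ⟨y, hy⟩ := exists_lintegral_le hfin
  refine ⟨y, ?_⟩
  rw [measureReal_def, measureReal_def, hfubini]
  exact ENNReal.toReal_mono (measure_ne_top _ _) hy

lemma norm_sub_add_le_of_three_quarters_le [IsProbabilityMeasure μ] {E : Type*}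
    [NormedAddCommGroup E] [MeasurableSpace E] [BorelSpace E] {X Y Z : Ω → E}
    (hX : Measurable X) (hY : Measurable Y) (hZ : Measurable Z) (hXYZ : ∀ ω, Z ω = X ω + Y ω)
    {a b c : E} {u : ℝ}
    (ha : 3 / 4 ≤ μ.real {ω | ‖X ω - a‖ ≤ u}) (hb : 3 / 4 ≤ μ.real {ω | ‖Y ω - b‖ ≤ u})
    (hc : 3 / 4 ≤ μ.real {ω | ‖Z ω - c‖ ≤ u}) :
    ‖c - (a + b)‖ ≤ 3 * u := by
  obtain ⟨ω, ⟨hωa, hωb⟩, hωc⟩ := nonempty_inter_inter_of_two_lt_measureReal_add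
    (measurableSet_le (hX.sub_const a).norm measurable_const)
    (measurableSet_le (hY.sub_const b).norm measurable_const)
    (measurableSet_le (hZ.sub_const c).norm measurable_const) (by linarith)
  simp only [Set.mem_ofPred_eq] at hωa hωb hωc
  calc ‖c - (a + b)‖ = ‖(X ω - a) + (Y ω - b) + -(Z ω - c)‖ := by rw [hXYZ]; abel_nf
    _ ≤ ‖X ω - a‖ + ‖Y ω - b‖ + ‖-(Z ω - c)‖ := norm_add₃_le
    _ ≤ 3 * u := by rw [norm_neg]; linarith

section Blocks

variable {ι E : Type*} [AddCommMonoid E] [mE : MeasurableSpace E] [MeasurableAdd₂ E]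
  {W : ι → Ω → E}

variable (W) in
lemma measurable_sum_iSup_comap {s : Set ι} {t : Finset ι} (hts : ↑t ⊆ s) :
    Measurable[⨆ i ∈ s, mE.comap (W i)] fun ω => ∑ i ∈ t, W i ω :=
  Finset.measurable_sum t fun i hi =>
    (comap_measurable (W i)).mono (le_iSup₂ (f := fun i (_ : i ∈ s) => mE.comap (W i)) i (hts hi))
      le_rfl

lemma ProbabilityTheory.iIndepFun.indepFun_sum_sum (hind : iIndepFun W μ)
    (hW : ∀ i, Measurable (W i)) {s t : Finset ι} (hst : Disjoint s t) :
    IndepFun (fun ω => ∑ i ∈ s, W i ω) (fun ω => ∑ i ∈ t, W i ω) μ := by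
  have hsum (r : Finset ι) : Measurable fun v : r → E => ∑ i, v i :=
    Finset.measurable_sum _ fun i _ => measurable_pi_apply i
  convert (hind.indepFun_finset s t hst hW).comp (hsum s) (hsum t) using 1 <;>
    exact funext fun ω => (Finset.sum_attach _ _).symm

lemma ProbabilityTheory.iIndepFun.identDistrib_sum_of_card_eq [IsProbabilityMeasure μ]
    (hind : iIndepFun W μ) (hW : ∀ i, Measurable (W i))
    (hid : ∀ i j, IdentDistrib (W i) (W j) μ μ) {s t : Finset ι} (hst : s.card = t.card) :
    IdentDistrib (fun ω => ∑ i ∈ s, W i ω) (fun ω => ∑ i ∈ t, W i ω) μ μ := by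
  classical
  induction s using Finset.induction_on generalizing t with
  | empty =>
    rw [Finset.card_empty, eq_comm, Finset.card_eq_zero] at hst
    subst hst
    exact IdentDistrib.refl measurable_const.aemeasurable
  | insert a s ha ih =>
    obtain ⟨b, hb⟩ : t.Nonempty := by rw [← Finset.card_pos, ← hst]; simp
    have hcard : s.card = (t.erase b).card := by
      rw [Finset.card_erase_of_mem hb, ← hst, Finset.card_insert_of_notMem ha]; rfl
    have hpair := (hid a b).prodMk (ih hcard)
      (by simpa only [Finset.sum_fn] using (hind.indepFun_finsetSum_of_notMem hW ha).symm)
      (by simpa only [Finset.sum_fn] using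
        (hind.indepFun_finsetSum_of_notMem hW (Finset.notMem_erase b t)).symm)
    convert hpair.comp measurable_add using 1 <;> funext ω
    · exact Finset.sum_insert ha
    · exact (Finset.add_sum_erase t (W · ω) hb).symm

end Blocks

section RandomWalk

variable {E : Type*} [NormedAddCommGroup E] [mE : MeasurableSpace E] [BorelSpace E]
  [SecondCountableTopology E] {W : ℕ → Ω → E}

lemma exists_center_partialSum [IsProbabilityMeasure μ] (hW : ∀ i, Measurable (W i))
    (hind : iIndepFun W μ) {n k : ℕ} (hk : k ≤ n) {u p : ℝ}
    (h : p ≤ μ.real {ω | ‖∑ i ∈ Finset.range n, W i ω‖ ≤ u}) :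
    ∃ a, p ≤ μ.real {ω | ‖∑ i ∈ Finset.range k, W i ω - a‖ ≤ u} := by
  have hindep := hind.indepFun_sum_sum hW (Finset.disjoint_range_Ico k n)
  obtain ⟨y, hy⟩ := hindep.exists_measureReal_add_mem_le
    (Finset.measurable_sum _ fun i _ => hW i) (Finset.measurable_sum _ fun i _ => hW i)
    (measurableSet_le measurable_norm measurable_const : MeasurableSet {x : E | ‖x‖ ≤ u})
  refine ⟨-y, h.trans ?_⟩
  simpa only [Set.mem_ofPred_eq, Finset.sum_range_add_sum_Ico _ hk, sub_neg_eq_add] using hy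

lemma measureReal_norm_sum_Ico_sub_le [IsProbabilityMeasure μ] (hW : ∀ i, Measurable (W i))
    (hind : iIndepFun W μ) (hid : ∀ i j, IdentDistrib (W i) (W j) μ μ) {j m : ℕ} (a : E)
    (u : ℝ) :
    μ.real {ω | ‖∑ i ∈ Finset.Ico j m, W i ω - a‖ ≤ u} =
      μ.real {ω | ‖∑ i ∈ Finset.range (m - j), W i ω - a‖ ≤ u} :=
  congrArg ENNReal.toReal <| (hind.identDistrib_sum_of_card_eq hW hid (by simp)).measure_mem_eq
    (measurableSet_le (by fun_prop) measurable_const : MeasurableSet {x : E | ‖x - a‖ ≤ u})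

lemma three_quarters_le_measureReal_norm_partialSum_le [IsProbabilityMeasure μ]
    [NormedSpace ℝ E] (hW : ∀ i, Measurable (W i)) (hind : iIndepFun W μ)
    (hid : ∀ i j, IdentDistrib (W i) (W j) μ μ) {n : ℕ} {u : ℝ}
    (h : 3 / 4 ≤ μ.real {ω | ‖∑ i ∈ Finset.range n, W i ω‖ ≤ u}) {k : ℕ} (hk : k ≤ n) :
    3 / 4 ≤ μ.real {ω | ‖∑ i ∈ Finset.range k, W i ω‖ ≤ 10 * u} := by
  choose! a ha using fun j (hj : j ≤ n) => exists_center_partialSum hW hind hj h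
  have hmeas (s : Finset ℕ) : Measurable fun ω => ∑ i ∈ s, W i ω :=
    Finset.measurable_sum s fun i _ => hW i
  have hsplit {j m : ℕ} (hjm : j ≤ m) (ω : Ω) : ∑ i ∈ Finset.range m, W i ω =
      ∑ i ∈ Finset.range j, W i ω + ∑ i ∈ Finset.Ico j m, W i ω :=
    (Finset.sum_range_add_sum_Ico _ hjm).symm
  have hblock {j m : ℕ} (hjm : j ≤ m) (hm : m ≤ n) :
      3 / 4 ≤ μ.real {ω | ‖∑ i ∈ Finset.Ico j m, W i ω - a (m - j)‖ ≤ u} := by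
    rw [measureReal_norm_sum_Ico_sub_le hW hind hid]
    exact ha (m - j) (by omega)
  have hdouble (j : ℕ) (hj : 2 * j ≤ n) : ‖a (2 * j) - (a j + a j)‖ ≤ 3 * u := by
    have hblock' := hblock (by omega : j ≤ 2 * j) hj
    rw [show 2 * j - j = j by omega] at hblock'
    exact norm_sub_add_le_of_three_quarters_le (hmeas _) (hmeas _) (hmeas _)
      (hsplit (by omega)) (ha j (by omega)) hblock' (ha (2 * j) hj)
  have hreflect (j : ℕ) (hj : j ≤ n) : ‖a j + a (n - j)‖ ≤ 3 * u := by
    have := norm_sub_add_le_of_three_quarters_le (c := 0) (hmeas _) (hmeas _) (hmeas _)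
      (hsplit hj) (ha j hj) (hblock hj le_rfl) (by simpa using h)
    rwa [zero_sub, norm_neg] at this
  have hak := norm_le_three_mul_of_norm_sub_add_self_le hdouble hreflect k hk
  refine (ha k hk).trans (measureReal_mono fun ω hω => ?_)
  simp only [Set.mem_ofPred_eq] at hω ⊢
  linarith [norm_le_norm_add_norm_sub' (∑ i ∈ Finset.range k, W i ω) (a k)]

-- The first-passage event: `k` is the first index with `t ≤ ‖S_k‖`.
variable (W) in
lemma measurableSet_disjointed_norm_partialSum_ge (t : ℝ) (k : ℕ) :
    MeasurableSet[⨆ i ∈ (Finset.range k : Set ℕ), mE.comap (W i)]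
      (disjointed (fun j => {ω | t ≤ ‖∑ i ∈ Finset.range j, W i ω‖}) k) := by
  rw [disjointed_eq_inter_compl]
  refine MeasurableSet.inter ?_ (MeasurableSet.iInter fun j => MeasurableSet.iInter fun hj =>
    MeasurableSet.compl ?_) <;>
    refine measurableSet_le measurable_const
      (measurable_norm.comp (measurable_sum_iSup_comap W ?_))
  · exact subset_rfl
  · exact Finset.coe_subset.2 (Finset.range_subset_range.2 hj.le)

lemma measureReal_inter_norm_sum_Ico_le [IsProbabilityMeasure μ] (hW : ∀ i, Measurable (W i))
    (hind : iIndepFun W μ) {k : ℕ} {A : Set Ω}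
    (hA : MeasurableSet[⨆ i ∈ (Finset.range k : Set ℕ), mE.comap (W i)] A) (n : ℕ) (v : ℝ) :
    μ.real (A ∩ {ω | ‖∑ i ∈ Finset.Ico k n, W i ω‖ ≤ v}) =
      μ.real A * μ.real {ω | ‖∑ i ∈ Finset.Ico k n, W i ω‖ ≤ v} := by
  have hblocks := indep_iSup_of_disjoint (fun i => (hW i).comap_le)
    ((iIndepFun_iff_iIndep _ _ _).mp hind)
    (Finset.disjoint_coe.2 (Finset.disjoint_range_Ico k n))
  have htail : MeasurableSet[⨆ i ∈ (Finset.Ico k n : Set ℕ), mE.comap (W i)]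
      {ω | ‖∑ i ∈ Finset.Ico k n, W i ω‖ ≤ v} :=
    measurableSet_le (measurable_norm.comp (measurable_sum_iSup_comap W subset_rfl))
      measurable_const
  simp only [measureReal_def, (Indep_iff _ _ _).mp hblocks _ _ hA htail, ENNReal.toReal_mul]

theorem ottaviani_ineq [IsProbabilityMeasure μ] (hW : ∀ i, Measurable (W i))
    (hind : iIndepFun W μ) {n : ℕ} {t v p : ℝ}
    (htail : ∀ k ≤ n, p ≤ μ.real {ω | ‖∑ i ∈ Finset.Ico k n, W i ω‖ ≤ v}) :
    p * μ.real {ω | ∃ k ≤ n, t ≤ ‖∑ i ∈ Finset.range k, W i ω‖} ≤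
      μ.real {ω | t - v ≤ ‖∑ i ∈ Finset.range n, W i ω‖} := by
  set F : ℕ → Set Ω := fun k => {ω | t ≤ ‖∑ i ∈ Finset.range k, W i ω‖}
  set C : ℕ → Set Ω := fun k => {ω | ‖∑ i ∈ Finset.Ico k n, W i ω‖ ≤ v}
  have hF (k : ℕ) : MeasurableSet (F k) :=
    measurableSet_le measurable_const (Finset.measurable_sum _ fun i _ => hW i).norm
  have hC (k : ℕ) : MeasurableSet (C k) :=
    measurableSet_le (Finset.measurable_sum _ fun i _ => hW i).norm measurable_const
  have hunion : {ω | ∃ k ≤ n, t ≤ ‖∑ i ∈ Finset.range k, W i ω‖} =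
      ⋃ k ∈ Finset.range (n + 1), disjointed F k := by
    rw [biUnion_range_succ_disjointed, partialSups_eq_biUnion_range]
    ext ω
    simp [F]
  have hindep (k : ℕ) :
      μ.real (disjointed F k ∩ C k) = μ.real (disjointed F k) * μ.real (C k) :=
    measureReal_inter_norm_sum_Ico_le hW hind (measurableSet_disjointed_norm_partialSum_ge W t k)
      n v
  have hdisjoint : (Finset.range (n + 1) : Set ℕ).PairwiseDisjoint (disjointed F) :=
    (disjoint_disjointed F).set_pairwise _
  have htarget (k : ℕ) (hk : k ≤ n) :
      disjointed F k ∩ C k ⊆ {ω | t - v ≤ ‖∑ i ∈ Finset.range n, W i ω‖} := by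
    rintro ω ⟨hωF, hωC⟩
    have hωF : t ≤ ‖∑ i ∈ Finset.range k, W i ω‖ := disjointed_subset F k hωF
    have hωC : ‖∑ i ∈ Finset.Ico k n, W i ω‖ ≤ v := hωC
    have hSk := eq_sub_of_add_eq (Finset.sum_range_add_sum_Ico (W · ω) hk)
    show t - v ≤ ‖∑ i ∈ Finset.range n, W i ω‖
    linarith [hSk ▸ norm_sub_le (∑ i ∈ Finset.range n, W i ω) (∑ i ∈ Finset.Ico k n, W i ω)]
  calc p * μ.real {ω | ∃ k ≤ n, t ≤ ‖∑ i ∈ Finset.range k, W i ω‖}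
      = ∑ k ∈ Finset.range (n + 1), p * μ.real (disjointed F k) := by
        rw [hunion, measureReal_biUnion_finset hdisjoint fun k _ => MeasurableSet.disjointed hF k,
          Finset.mul_sum]
    _ ≤ ∑ k ∈ Finset.range (n + 1), μ.real (disjointed F k ∩ C k) := by
        refine Finset.sum_le_sum fun k hk => ?_
        rw [hindep, mul_comm p]
        exact mul_le_mul_of_nonneg_left (htail k (by simpa [Nat.lt_succ_iff] using hk))
          measureReal_nonneg
    _ = μ.real (⋃ k ∈ Finset.range (n + 1), disjointed F k ∩ C k) :=
        (measureReal_biUnion_finset (hdisjoint.mono fun k => Set.inter_subset_left)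
          fun k _ => (MeasurableSet.disjointed hF k).inter (hC k)).symm
    _ ≤ μ.real {ω | t - v ≤ ‖∑ i ∈ Finset.range n, W i ω‖} :=
        measureReal_mono (Set.iUnion₂_subset fun k hk =>
          htarget k (by simpa [Nat.lt_succ_iff] using hk))

lemma measureReal_exists_le_norm_partialSum_le_of_three_quarters_le [IsProbabilityMeasure μ]
    [NormedSpace ℝ E] (hW : ∀ i, Measurable (W i)) (hind : iIndepFun W μ)
    (hid : ∀ i j, IdentDistrib (W i) (W j) μ μ) {n : ℕ} {u : ℝ}
    (h : 3 / 4 ≤ μ.real {ω | ‖∑ i ∈ Finset.range n, W i ω‖ ≤ u}) (t : ℝ) :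
    μ.real {ω | ∃ k ≤ n, t ≤ ‖∑ i ∈ Finset.range k, W i ω‖} ≤
      4 / 3 * μ.real {ω | t - 10 * u ≤ ‖∑ i ∈ Finset.range n, W i ω‖} := by
  have htail (k : ℕ) (hk : k ≤ n) :
      3 / 4 ≤ μ.real {ω | ‖∑ i ∈ Finset.Ico k n, W i ω‖ ≤ 10 * u} := by
    have hlaw := measureReal_norm_sum_Ico_sub_le hW hind hid (j := k) (m := n) 0 (10 * u)
    simp only [sub_zero] at hlaw
    exact hlaw ▸ three_quarters_le_measureReal_norm_partialSum_le hW hind hid h (Nat.sub_le n k)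
  linarith [ottaviani_ineq (t := t) hW hind htail]

end RandomWalk

end

/-- Montgomery–Smith Lévy-type inequality: there is a universal constant `C`
such that for any i.i.d. sequence `W_1,…,W_n` in a separable Banach space and
any `t > 0`, `P(max_{k ≤ n} ‖∑_{i≤k} W_i‖ ≥ t) ≤ C · P(‖∑_{i≤n} W_i‖ ≥ t/C)`. -/
theorem montgomery_smith_levy :
    ∃ C : ℝ, 0 < C ∧
      ∀ (Ω : Type) [inst : MeasurableSpace Ω] (ℙ : Measure Ω),
        IsProbabilityMeasure ℙ →
      ∀ (B : Type) [instB : NormedAddCommGroup B] [instB2 : NormedSpace ℝ B]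
        [instB3 : MeasurableSpace B] [instB4 : BorelSpace B]
        [instB5 : SecondCountableTopology B],
      ∀ (W : ℕ → Ω → B), (∀ i, Measurable (W i)) →
        ProbabilityTheory.iIndepFun (m := fun _ => instB3) W ℙ →
        (∀ i, ProbabilityTheory.IdentDistrib (W i) (W 0) ℙ ℙ) →
      ∀ (n : ℕ) (t : ℝ), 0 < t →
        (ℙ {ω | ∃ k ≤ n, t ≤ ‖∑ i ∈ Finset.range k, W i ω‖}).toReal ≤
          C * (ℙ {ω | t / C ≤ ‖∑ i ∈ Finset.range n, W i ω‖}).toReal := by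
  refine ⟨30, by norm_num, fun Ω _ P _ B _ _ _ _ _ W hW hind hid n t ht => ?_⟩
  change P.real _ ≤ 30 * P.real _
  set p := P.real {ω | t / 30 ≤ ‖∑ i ∈ Finset.range n, W i ω‖}
  by_cases hp : 1 / 4 ≤ p
  · linarith [measureReal_le_one (μ := P) (s := {ω | ∃ k ≤ n, t ≤ ‖∑ i ∈ Finset.range k, W i ω‖})]
  have hcompl : P.real {ω | t / 30 ≤ ‖∑ i ∈ Finset.range n, W i ω‖}ᶜ = 1 - p :=
    probReal_compl_eq_one_sub
      (measurableSet_le measurable_const (Finset.measurable_sum _ fun i _ => hW i).norm)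
  have hsmall : 3 / 4 ≤ P.real {ω | ‖∑ i ∈ Finset.range n, W i ω‖ ≤ t / 30} :=
    (by linarith : 3 / 4 ≤ 1 - p).trans
      (hcompl ▸ measureReal_mono fun ω (hω : ¬t / 30 ≤ _) => (not_le.mp hω).le)
  have hmono : P.real {ω | t - 10 * (t / 30) ≤ ‖∑ i ∈ Finset.range n, W i ω‖} ≤ p :=
    measureReal_mono fun ω hω => by simp only [Set.mem_ofPred_eq] at hω ⊢; linarith
  linarith [measureReal_nonneg (μ := P) (s := {ω | t / 30 ≤ ‖∑ i ∈ Finset.range n, W i ω‖}),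
    measureReal_exists_le_norm_partialSum_le_of_three_quarters_le hW hind
      (fun i j => (hid i).trans (hid j).symm) hsmall t]
end
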